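/- arXiv:1509.03406 — 8 statements merged into one kernel-verified Lean document; each statement's English description precedes it below -/
import Mathlib

section
/- Let K be a field and μ_1, μ_2, μ_3, μ_4 ∈ K pairwise distinct. Then ∑_{1 ≤ i < j ≤ 4} ( (μ_i + μ_j)² · μ_i · μ_j ) / ∏_{k ∈ {1,2,3,4} \ {i,j}} ( (μ_k − μ_i)(μ_k − μ_j) ) = 1. -/
/-!
With the nodal weights `w i = ∏_{k ≠ i} (μ i - μ k)⁻¹`, the denominator of the summand for
`{i, j}` is `-((μ i - μ j)² w i w j)⁻¹`, and `-(x - y)² (x + y)² x y = 2 x³ y³ - (x⁵ y + x y⁵)`.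
Summing a symmetric expression `a i b j + a j b i` over `i < j` gives `(∑ a) (∑ b) - ∑ a b`,
and the diagonal corrections of the two products cancel, leaving
`(∑ μ³ w)² - (∑ μ⁵ w)(∑ μ w)`. By Lagrange interpolation `∑ μ^m w` is the coefficient of `X³` in
`X^m` for `m < 4`, so `∑ μ³ w = 1` and `∑ μ w = 0`.
-/

open Finset Polynomial Lagrange

theorem Finset.sum_filter_lt_add_swap_add_sum_diag {ι M : Type*} [Fintype ι] [LinearOrder ι]
    [AddCommMonoid M] (f : ι → ι → M) :
    ∑ p ∈ univ.filter (fun p : ι × ι => p.1 < p.2), (f p.1 p.2 + f p.2 p.1) + ∑ i, f i i =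
      ∑ i, ∑ j, f i j := by
  have hswap : ∑ p ∈ univ.filter (fun p : ι × ι => p.1 < p.2), f p.2 p.1 =
      ∑ p ∈ univ.filter (fun p : ι × ι => p.2 < p.1), f p.1 p.2 :=
    sum_equiv (Equiv.prodComm ι ι) (by simp) (by simp)
  have hdiag : ∑ i, f i i = ∑ p : ι × ι, if p.1 = p.2 then f p.1 p.2 else 0 := by
    simp [Fintype.sum_prod_type]
  rw [sum_add_distrib, hswap, hdiag, sum_filter, sum_filter, ← sum_add_distrib, ← sum_add_distrib,
    ← Fintype.sum_prod_type']
  refine sum_congr rfl fun p _ => ?_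
  rcases lt_trichotomy p.1 p.2 with h | h | h
  · simp [h, h.ne, not_lt_of_gt h]
  · simp [h]
  · simp [h, h.ne', not_lt_of_gt h]

theorem Finset.sum_filter_lt_mul_add_mul_swap {ι R : Type*} [Fintype ι] [LinearOrder ι]
    [CommRing R] (a b : ι → R) :
    ∑ p ∈ univ.filter (fun p : ι × ι => p.1 < p.2), (a p.1 * b p.2 + a p.2 * b p.1) =
      (∑ i, a i) * (∑ i, b i) - ∑ i, a i * b i := by
  rw [eq_sub_iff_add_eq, sum_filter_lt_add_swap_add_sum_diag (fun i j => a i * b j), sum_mul_sum]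

namespace Lagrange

variable {ι F : Type*} [DecidableEq ι] [Field F] {s : Finset ι} {μ : ι → F}

theorem sum_pow_mul_nodalWeight (hμ : Set.InjOn μ s) {m : ℕ} (hm : m < #s) :
    ∑ i ∈ s, μ i ^ m * nodalWeight s μ i = if #s - 1 = m then 1 else 0 := by
  have hdeg : (X ^ m : F[X]).degree < #s := by
    rw [degree_X_pow]; exact_mod_cast hm
  rw [← coeff_X_pow, coeff_eq_sum hμ hdeg]
  refine sum_congr rfl fun i _ => ?_
  rw [eval_pow, eval_X, nodalWeight, prod_inv_distrib, div_eq_mul_inv]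

theorem inv_prod_erase_erase_eq_nodalWeight {i j : ι} (hi : i ∈ s) (hj : j ∈ s)
    (hij : μ i ≠ μ j) :
    (∏ k ∈ (s.erase i).erase j, ((μ k - μ i) * (μ k - μ j)))⁻¹ =
      -((μ i - μ j) ^ 2 * nodalWeight s μ i * nodalWeight s μ j) := by
  have hne : i ≠ j := fun h => hij (congrArg μ h)
  have hsym : ∀ k, (μ k - μ i) * (μ k - μ j) = (μ i - μ k) * (μ j - μ k) := fun k => by ring
  rw [prod_congr rfl fun k _ => hsym k, nodalWeight, nodalWeight,
    ← mul_prod_erase _ _ (mem_erase.2 ⟨hne.symm, hj⟩), ← mul_prod_erase _ _ (mem_erase.2 ⟨hne, hi⟩),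
    erase_right_comm, prod_mul_distrib, prod_inv_distrib, prod_inv_distrib]
  field_simp
  ring

end Lagrange

/-- **Localisation on `Gr(2,4)`** (Example 3.2/3.3): for pairwise distinct `μ_1, μ_2, μ_3, μ_4`
in a field `K`,
`∑_{1 ≤ i < j ≤ 4} (μ_i + μ_j)² μ_i μ_j / ∏_{k ∉ {i,j}} (μ_k − μ_i)(μ_k − μ_j) = 1`. -/
theorem abbv_localisation_grass24 {K : Type*} [Field K] (μ : Fin 4 → K)
    (hμ : Function.Injective μ) :
    ∑ p ∈ Finset.univ.filter (fun p : Fin 4 × Fin 4 => p.1 < p.2),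
      ((μ p.1 + μ p.2) ^ 2 * μ p.1 * μ p.2) /
        ∏ k ∈ (Finset.univ.erase p.1).erase p.2, ((μ k - μ p.1) * (μ k - μ p.2)) = 1 := by
  set w := nodalWeight (univ : Finset (Fin 4)) μ
  have hS1 : ∑ i, μ i ^ 1 * w i = 0 := sum_pow_mul_nodalWeight hμ.injOn (by simp)
  have hS3 : ∑ i, μ i ^ 3 * w i = 1 := sum_pow_mul_nodalWeight hμ.injOn (by simp)
  have hterm : ∀ p ∈ univ.filter (fun p : Fin 4 × Fin 4 => p.1 < p.2),
      (μ p.1 + μ p.2) ^ 2 * μ p.1 * μ p.2 /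
        ∏ k ∈ (univ.erase p.1).erase p.2, ((μ k - μ p.1) * (μ k - μ p.2)) =
      (μ p.1 ^ 3 * w p.1 * (μ p.2 ^ 3 * w p.2) + μ p.2 ^ 3 * w p.2 * (μ p.1 ^ 3 * w p.1)) -
      (μ p.1 ^ 5 * w p.1 * (μ p.2 ^ 1 * w p.2) + μ p.2 ^ 5 * w p.2 * (μ p.1 ^ 1 * w p.1)) := by
    intro p hp
    rw [div_eq_mul_inv, inv_prod_erase_erase_eq_nodalWeight (mem_univ _) (mem_univ _)
      (hμ.ne (mem_filter.1 hp).2.ne)]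
    ring
  have hdiag : ∑ i, μ i ^ 3 * w i * (μ i ^ 3 * w i) = ∑ i, μ i ^ 5 * w i * (μ i ^ 1 * w i) :=
    sum_congr rfl fun i _ => by ring
  rw [sum_congr rfl hterm, sum_sub_distrib,
    sum_filter_lt_mul_add_mul_swap (fun i => μ i ^ 3 * w i) (fun i => μ i ^ 3 * w i),
    sum_filter_lt_mul_add_mul_swap (fun i => μ i ^ 5 * w i) (fun i => μ i ^ 1 * w i), hS1, hS3, hdiag]
  ring
end

section
/- Let V be a vector space over ℚ, n ≥ 1 an integer, and λ_1, …, λ_n ∈ V linearly independent. Let i ≥ 1 and let w_1, …, w_i ∈ V satisfy w_j ∈ S(w_1, …, w_{j−1}) for every 1 ≤ j ≤ i. Then S(w_1, …, w_i) = ( {λ_m − (w_1 + ⋯ + w_i) : 1 ≤ m ≤ n} ∪ {w_s − (w_{s+1} + ⋯ + w_i) : 1 ≤ s ≤ i−1} ∪ {w_i} ) \ ( {0} ∪ { −(w_t + w_{t+1} + ⋯ + w_i) : 2 ≤ t ≤ i } ), where for i = 1 the subtracted set is just {0}. -/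
/-- The recursively defined weight sets of the Demailly–Semple tower:
`SW lam [w_j, …, w_1] = S(w_1, …, w_j)`, where `S() = lam` and
`S(w_1, …, w_j) = ({w_j} ∪ {w − w_j : w ∈ S(w_1, …, w_{j−1})}) \ {0}`.
(The list argument records the weights in reverse order, most recent first.) -/
def SW {V : Type*} [AddCommGroup V] [Module ℚ V] (lam : Set V) : List V → Set V
  | [] => lam
  | w :: ws => (insert w ((fun x => x - w) '' SW lam ws)) \ {0}

/-- `sR w s t = w_s + w_{s+1} + ⋯ + w_t` (1-based indices; `0` if `s > t`). -/
def sR {V : Type*} [AddCommGroup V] {i : ℕ} (w : Fin i → V) (s t : ℕ) : V :=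
  ∑ j ∈ Finset.univ.filter (fun j : Fin i => s ≤ j.val + 1 ∧ j.val + 1 ≤ t), w j

/-!
Write `S = S(w_1, …, w_i)`. The step `S ↦ ({w} ∪ (S - w)) \ {0}` with `w ∈ S` is a unimodular
change of basis, so `S` stays linearly independent. Every element of the previous set is `w` or
`(x - w) + w`, so `w_1, …, w_i` all lie in the additive monoid generated by `S`. Hence a linear
form that is `1` at `x ∈ S` and `0` on the rest of `S` is nonnegative on that monoid, which gives
`2 x + w_t + ⋯ + w_i ≠ 0`. This is exactly what makes the induction on `i` go through: the new
weight `w_{i+1}` is not cancelled by the shifted old cancellations `−(w_t + ⋯ + w_{i+1})`.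
-/

section

variable {V : Type*} [AddCommGroup V] [Module ℚ V]

/-- `Admissible S₀ [w_j, …, w_1]`: `w_k ∈ S(w_1, …, w_{k-1})` for every `k ≤ j`. -/
def Admissible (S₀ : Set V) : List V → Prop
  | [] => True
  | w :: ws => w ∈ SW S₀ ws ∧ Admissible S₀ ws

theorem zero_notMem_SW {S₀ : Set V} (h0 : 0 ∉ S₀) : ∀ l : List V, 0 ∉ SW S₀ l
  | [] => h0
  | _ :: _ => fun h => h.2 rfl

theorem SW_subset_closure_SW_cons {S₀ : Set V} (h0 : 0 ∉ S₀) {a : V} {l : List V}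
    (ha : a ∈ SW S₀ l) : SW S₀ l ⊆ AddSubmonoid.closure (SW S₀ (a :: l)) := by
  have haS : a ∈ SW S₀ (a :: l) :=
    ⟨Set.mem_insert _ _, fun h => zero_notMem_SW h0 l (Set.mem_singleton_iff.1 h ▸ ha)⟩
  intro y hy
  by_cases hya : y = a
  · rw [hya]
    exact AddSubmonoid.subset_closure haS
  · have hyaS : y - a ∈ SW S₀ (a :: l) :=
      ⟨Set.mem_insert_of_mem _ ⟨y, hy, rfl⟩, fun h => hya (sub_eq_zero.1 h)⟩
    simpa using AddSubmonoid.add_mem _ (AddSubmonoid.subset_closure hyaS)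
      (AddSubmonoid.subset_closure haS)

theorem mem_closure_SW_of_mem {S₀ : Set V} (h0 : 0 ∉ S₀) :
    ∀ {l : List V}, Admissible S₀ l → ∀ a ∈ l, a ∈ AddSubmonoid.closure (SW S₀ l)
  | [], _ => by simp
  | b :: l, ⟨hb, hl⟩ => by
    have hsub := AddSubmonoid.closure_le.2 (SW_subset_closure_SW_cons h0 hb)
    rintro a (_ | ⟨_, ha⟩)
    · exact SW_subset_closure_SW_cons h0 hb hb
    · exact hsub (mem_closure_SW_of_mem h0 hl a ha)

end

theorem LinearIndepOn.exists_linearMap_eqOn {K V : Type*} [Field K] [AddCommGroup V]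
    [Module K V] {S₀ : Set V} (hS : LinearIndepOn K id S₀) (ρ : V → K) :
    ∃ f : V →ₗ[K] K, Set.EqOn f ρ S₀ := by
  let b := Module.Basis.extend hS
  refine ⟨b.constr K fun v => ρ v, fun v hv => ?_⟩
  have := b.constr_basis K (fun v => ρ v) ⟨v, hS.subset_extend (Set.subset_univ _) hv⟩
  rwa [Module.Basis.extend_apply_self] at this

section

variable {V : Type*} [AddCommGroup V] [Module ℚ V]

theorem exists_linearMap_eqOn_SW {S₀ : Set V} (hS : LinearIndepOn ℚ id S₀) :
    ∀ {l : List V}, Admissible S₀ l → ∀ ρ : V → ℚ, ∃ f : V →ₗ[ℚ] ℚ, Set.EqOn f ρ (SW S₀ l)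
  | [], _, ρ => hS.exists_linearMap_eqOn ρ
  | a :: l, ⟨ha, hl⟩, ρ => by
    classical
    obtain ⟨f, hf⟩ := exists_linearMap_eqOn_SW hS hl
      fun y => if y = a then ρ a else ρ (y - a) + ρ a
    have hfa : f a = ρ a := by simpa using hf ha
    refine ⟨f, ?_⟩
    rintro v ⟨hv | ⟨y, hy, rfl⟩, hv0⟩
    · exact (Set.mem_singleton_iff.1 hv) ▸ hfa
    · have hya : y ≠ a := fun h => hv0 (by simp [h])
      simp [hf hy, hfa, hya]

theorem add_ne_zero_of_mem_SW {S₀ : Set V} (hS : LinearIndepOn ℚ id S₀) {l : List V}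
    (hl : Admissible S₀ l) {x y : V} (hx : x ∈ SW S₀ l)
    (hy : y ∈ AddSubmonoid.closure (SW S₀ l)) : x + y ≠ 0 := by
  classical
  obtain ⟨f, hf⟩ := exists_linearMap_eqOn_SW hS hl fun v => if v = x then 1 else 0
  have hfy : 0 ≤ f y := by
    induction hy using AddSubmonoid.closure_induction with
    | mem v hv => rw [hf hv]; dsimp only; split_ifs <;> norm_num
    | zero => simp
    | add u v _ _ hu hv => rw [map_add]; positivity
  intro h
  have := congrArg f h
  rw [map_add, hf hx, map_zero] at this
  simp only [if_pos] at this
  linarith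

end

theorem Set.insert_image_sub_sdiff {G : Type*} [AddGroup G] (A B : Set G) {a : G}
    (ha : a + a ∉ B) :
    insert a ((· - a) '' (A \ B)) \ {0} = insert a ((· - a) '' A) \ insert 0 ((· - a) '' B) := by
  have ha' : a ∉ (· - a) '' B := by
    rintro ⟨b, hb, hba⟩
    exact ha (by rwa [← sub_eq_iff_eq_add.1 hba])
  rw [Set.image_sdiff (sub_left_injective), ← Set.insert_sdiff_of_notMem _ ha', Set.sdiff_sdiff,
    Set.union_comm, ← Set.insert_eq]

section

variable {V : Type*} [AddCommGroup V]

/-- For `l = [w_i, …, w_1]` this is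
`{λ − (w_1 + ⋯ + w_i) : λ ∈ S₀} ∪ {w_s − (w_{s+1} + ⋯ + w_i) : 1 ≤ s ≤ i}`
(the term `s = i` is `w_i`); position `k` of `l` holds `w_{i-k}`. -/
def candidateWeights (S₀ : Set V) (l : List V) : Set V :=
  (· - l.sum) '' S₀ ∪ Set.range fun k : Fin l.length => l[k] - (l.take k).sum

/-- For `l = [w_i, …, w_1]` this is `{−(w_t + ⋯ + w_i) : 2 ≤ t ≤ i + 1}` (the term `t = i + 1`
is `0`). -/
def cancelledWeights (l : List V) : Set V :=
  Set.range fun k : Fin l.length => -(l.take k).sum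

theorem candidateWeights_cons (S₀ : Set V) (a : V) (l : List V) :
    candidateWeights S₀ (a :: l) = insert a ((· - a) '' candidateWeights S₀ l) := by
  ext v
  simp only [candidateWeights, Set.mem_union, Set.mem_image, Set.mem_range, Set.mem_insert_iff,
    or_and_right, exists_or, exists_exists_and_eq_and]
  simp [Fin.exists_fin_succ, sub_sub, add_comm, or_left_comm, eq_comm]

theorem cancelledWeights_cons (a : V) (l : List V) :
    cancelledWeights (a :: l) = insert 0 ((· - a) '' cancelledWeights l) := by
  ext v
  simp [cancelledWeights, Fin.exists_fin_succ, ← eq_sub_iff_add_eq, sub_eq_add_neg, eq_comm]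

end

theorem SW_eq_candidateWeights_sdiff {V : Type*} [AddCommGroup V] [Module ℚ V] {S₀ : Set V}
    (hS : LinearIndepOn ℚ id S₀) :
    ∀ {l : List V}, Admissible S₀ l → SW S₀ l = candidateWeights S₀ l \ cancelledWeights l
  | [], _ => by simp [SW, candidateWeights, cancelledWeights]
  | a :: l, ⟨ha, hl⟩ => by
    have h0 : (0 : V) ∉ S₀ := by simpa using hS.zero_notMem_image
    have hclosure := mem_closure_SW_of_mem h0 hl
    have hfresh : a + a ∉ cancelledWeights l := by
      rintro ⟨k, hk⟩
      refine add_ne_zero_of_mem_SW hS hl ha (y := a + (l.take k).sum)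
        (add_mem (AddSubmonoid.subset_closure ha)
          (AddSubmonoid.list_sum_mem _ fun b hb => hclosure b ?_)) ?_
      · exact List.mem_of_mem_take hb
      · rw [← add_assoc, ← hk, neg_add_cancel]
    rw [SW, SW_eq_candidateWeights_sdiff hS hl, Set.insert_image_sub_sdiff _ _ hfresh,
      candidateWeights_cons, cancelledWeights_cons]

theorem admissible_reverse_iff {V : Type*} [AddCommGroup V] [Module ℚ V] {S₀ : Set V}
    {l : List V} :
    Admissible S₀ l.reverse ↔ ∀ j (hj : j < l.length), l[j] ∈ SW S₀ (l.take j).reverse := by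
  induction l using List.reverseRecOn with
  | nil => simp [Admissible]
  | append_singleton l a ih =>
    rw [List.reverse_append, List.reverse_singleton, List.singleton_append, Admissible, ih]
    constructor
    · rintro ⟨ha, hl⟩ j hj
      rcases Nat.lt_succ_iff_lt_or_eq.1 (by simpa using hj) with hj | rfl
      · simpa [List.getElem_append_left hj, List.take_append_of_le_length hj.le] using hl j hj
      · simpa using ha
    · intro h
      refine ⟨by simpa using h l.length (by simp), fun j hj => ?_⟩
      have := h j (by simp; omega)
      rwa [List.getElem_append_left hj, List.take_append_of_le_length hj.le] at this

section

variable {V : Type*} {i : ℕ} (w : Fin i → V)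

def revIndex : Fin i → Fin (List.ofFn w).reverse.length :=
  fun s => Fin.cast (by simp) s.rev

theorem revIndex_surjective : Function.Surjective (revIndex w) :=
  fun k => ⟨(Fin.cast (by simp) k).rev, by ext; simp [revIndex]⟩

variable [AddCommGroup V]

theorem sR_eq_sum_drop (t : ℕ) : sR w t i = ((List.ofFn w).drop (t - 1)).sum := by
  rw [eq_sub_of_add_eq' (List.sum_take_add_sum_drop _ _), List.sum_take_ofFn, List.sum_ofFn,
    sR, ← Finset.sum_filter_not_add_sum_filter Finset.univ (fun j : Fin i => j.val < t - 1),
    add_sub_cancel_right]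
  exact Finset.sum_congr (Finset.filter_congr fun j _ => by omega) fun _ _ => rfl

theorem sR_eq_zero_of_lt {t : ℕ} (ht : i < t) : sR w t i = 0 := by
  rw [sR_eq_sum_drop, List.drop_eq_nil_of_le (by simp; omega), List.sum_nil]

theorem sum_take_reverse_ofFn (k : ℕ) :
    ((List.ofFn w).reverse.take k).sum = sR w (i - k + 1) i := by
  rw [List.take_reverse, List.sum_reverse, List.length_ofFn, sR_eq_sum_drop, Nat.add_sub_cancel]

theorem candidateWeights_ofFn_reverse (S₀ : Set V) :
    candidateWeights S₀ (List.ofFn w).reverse =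
      (· - sR w 1 i) '' S₀ ∪ Set.range fun s : Fin i => w s - sR w (s + 2) i := by
  rw [candidateWeights, List.sum_reverse, sR_eq_sum_drop, ← (revIndex_surjective w).range_comp]
  congr 3
  funext s
  have hs := s.isLt
  simp only [revIndex, Function.comp_apply, Fin.getElem_fin, Fin.val_cast, Fin.val_rev,
    List.getElem_reverse, List.getElem_ofFn, List.length_ofFn, sum_take_reverse_ofFn]
  rw [show i - (i - (s + 1)) + 1 = s + 2 by omega]
  congr 2
  ext
  simp only
  omega

theorem cancelledWeights_ofFn_reverse :
    cancelledWeights (List.ofFn w).reverse = Set.range fun s : Fin i => -sR w (s + 2) i := by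
  rw [cancelledWeights, ← (revIndex_surjective w).range_comp]
  congr 1
  funext s
  have hs := s.isLt
  simp only [revIndex, Function.comp_apply, Fin.val_cast, Fin.val_rev, sum_take_reverse_ofFn]
  rw [show i - (i - (s + 1)) + 1 = s + 2 by omega]

theorem range_sub_sR_eq (hi : 1 ≤ i) :
    (Set.range fun s : Fin i => w s - sR w (s + 2) i) =
      {v | ∃ s : Fin i, s.val + 1 ≤ i - 1 ∧ v = w s - sR w (s.val + 2) i} ∪
        {w ⟨i - 1, Nat.sub_lt hi Nat.one_pos⟩} := by
  have hlast : sR w (i - 1 + 2) i = 0 := sR_eq_zero_of_lt w (by omega)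
  ext v
  constructor
  · rintro ⟨s, rfl⟩
    by_cases hs : s.val + 1 ≤ i - 1
    · exact Or.inl ⟨s, hs, rfl⟩
    · have hs' : s = ⟨i - 1, by omega⟩ := Fin.ext (by simp; omega)
      simp [hs', hlast]
  · rintro (⟨s, -, rfl⟩ | hv)
    · exact ⟨s, rfl⟩
    · exact ⟨⟨i - 1, by omega⟩, by simp [Set.mem_singleton_iff.1 hv, hlast]⟩

theorem range_neg_sR_eq (hi : 1 ≤ i) :
    (Set.range fun s : Fin i => -sR w (s + 2) i) =
      {0} ∪ {v | ∃ t : ℕ, 2 ≤ t ∧ t ≤ i ∧ v = -sR w t i} := by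
  ext v
  constructor
  · rintro ⟨s, rfl⟩
    by_cases hs : s.val + 2 ≤ i
    · exact Or.inr ⟨s + 2, by omega, hs, rfl⟩
    · simp [sR_eq_zero_of_lt w (show i < s.val + 2 by omega)]
  · rintro (hv | ⟨t, ht2, hti, rfl⟩)
    · refine ⟨⟨i - 1, by omega⟩, ?_⟩
      simp [Set.mem_singleton_iff.1 hv, sR_eq_zero_of_lt w (show i < i - 1 + 2 by omega)]
    · exact ⟨⟨t - 2, by omega⟩, by simp only; congr 2; omega⟩

end

/-- **Lemma 4.1**: explicit description of the weight sets `S(w_1, …, w_i)` for admissible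
weight sequences, for a linearly independent family `λ_1, …, λ_n` in a `ℚ`-vector space:
`S(w_1,…,w_i) = ({λ_m − (w_1+⋯+w_i)} ∪ {w_s − (w_{s+1}+⋯+w_i) : 1 ≤ s ≤ i−1} ∪ {w_i})
\ ({0} ∪ {−(w_t+⋯+w_i) : 2 ≤ t ≤ i})`. -/
theorem weights_of_demailly_semple_tower {V : Type*} [AddCommGroup V] [Module ℚ V]
    (n : ℕ) (lam : Fin n → V) (hlam : LinearIndependent ℚ lam)
    (i : ℕ) (hi : 1 ≤ i) (w : Fin i → V)
    (hw : ∀ j : Fin i, w j ∈ SW (Set.range lam) (((List.ofFn w).take j.val).reverse)) :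
    SW (Set.range lam) (List.ofFn w).reverse =
      ({v | ∃ m : Fin n, v = lam m - sR w 1 i} ∪
        {v | ∃ s : Fin i, s.val + 1 ≤ i - 1 ∧ v = w s - sR w (s.val + 2) i} ∪
        {w ⟨i - 1, by omega⟩}) \
      ({0} ∪ {v | ∃ t : ℕ, 2 ≤ t ∧ t ≤ i ∧ v = -sR w t i}) := by
  have hS : LinearIndepOn ℚ id (Set.range lam) :=
    (linearIndepOn_id_range_iff hlam.injective).2 hlam
  have hl : Admissible (Set.range lam) (List.ofFn w).reverse :=
    admissible_reverse_iff.2 fun j hj => by simpa using hw ⟨j, by simpa using hj⟩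
  have hshift : (· - sR w 1 i) '' Set.range lam = {v | ∃ m : Fin n, v = lam m - sR w 1 i} := by
    ext v
    simp [eq_comm]
  rw [SW_eq_candidateWeights_sdiff hS hl, candidateWeights_ofFn_reverse,
    cancelledWeights_ofFn_reverse, range_sub_sR_eq w hi, range_neg_sR_eq w hi, ← Set.union_assoc,
    hshift]
end

section
/- Let n ≥ 1 and m ≥ 0 be integers. The set { i ∈ Λ⁺ : Σi = 0 and D(i) = m } is finite and has cardinality at most (n−1)^m. -/
/-!
An element of `Λ⁺` with `Σi = 0` is a sum of simple roots `α_j = e_j − e_{j+1}`: each generator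
`e_s − e_t` telescopes into simple roots and has `Σ = 0`, while each `−e_j` has `Σ = −1` and so
cannot occur. Every simple root has defect `1`, so an element of defect `m` is a sum of exactly
`m` simple roots, i.e. the image of a word in `Fin m → Fin (n − 1)`.
-/

/-- The lattice semigroup `Λ⁺ ⊆ ℤ^n`, generated by the elements `e_s − e_t` for `s < t`
together with `−e_1, …, −e_n`. -/
def Lam (n : ℕ) : AddSubmonoid (Fin n → ℤ) :=
  AddSubmonoid.closure
    ({x | ∃ s t : Fin n, s < t ∧ x = Pi.single s 1 - Pi.single t 1} ∪
      {x | ∃ j : Fin n, x = -Pi.single j 1})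

/-- `Σi = i_1 + ⋯ + i_n`. -/
def Sig {n : ℕ} (i : Fin n → ℤ) : ℤ := ∑ j, i j

/-- The defect `D(i) = n·i_1 + (n−1)·i_2 + ⋯ + 1·i_n`. -/
def Dfk {n : ℕ} (i : Fin n → ℤ) : ℤ := ∑ j : Fin n, ((n : ℤ) - j.val) * i j

theorem AddSubmonoid.exists_fin_sum_eq_of_mem_closure_range {M ι : Type*} [AddCommMonoid M]
    {f : ι → M} {x : M} (hx : x ∈ closure (Set.range f)) :
    ∃ (m : ℕ) (c : Fin m → ι), ∑ k, f (c k) = x := by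
  induction hx using closure_induction with
  | mem _ hy =>
    obtain ⟨j, rfl⟩ := hy
    exact ⟨1, fun _ => j, by simp⟩
  | zero => exact ⟨0, Fin.elim0, by simp⟩
  | add _ _ _ _ ha hb =>
    obtain ⟨a, c, rfl⟩ := ha
    obtain ⟨b, d, rfl⟩ := hb
    exact ⟨a + b, Fin.append c d, by simp [Fin.sum_univ_add]⟩

section SimpleRoots

variable {n : ℕ}

def sigHom (n : ℕ) : (Fin n → ℤ) →+ ℤ := AddMonoidHom.mk' Sig fun a b => by
  simp [Sig, Finset.sum_add_distrib]

def dfkHom (n : ℕ) : (Fin n → ℤ) →+ ℤ := AddMonoidHom.mk' Dfk fun a b => by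
  simp [Dfk, mul_add, Finset.sum_add_distrib]

@[simp]
theorem sigHom_apply (x : Fin n → ℤ) : sigHom n x = Sig x := rfl

@[simp]
theorem dfkHom_apply (x : Fin n → ℤ) : dfkHom n x = Dfk x := rfl

theorem sig_single (a : Fin n) : Sig (Pi.single a 1 : Fin n → ℤ) = 1 := by
  simp [Sig]

theorem dfk_single (a : Fin n) : Dfk (Pi.single a 1 : Fin n → ℤ) = n - a.val := by
  simp [Dfk, Pi.single_apply]

def simpleRoot (n : ℕ) (j : Fin (n - 1)) : Fin n → ℤ :=
  Pi.single ⟨j, by omega⟩ 1 - Pi.single ⟨j + 1, by omega⟩ 1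

theorem simpleRoot_eq (j : Fin (n - 1)) {a b : Fin n} (ha : a.val = j) (hb : b.val = j + 1) :
    simpleRoot n j = Pi.single a 1 - Pi.single b 1 := by
  obtain ⟨a, _⟩ := a
  obtain ⟨b, _⟩ := b
  subst ha hb
  rfl

theorem sig_simpleRoot (j : Fin (n - 1)) : Sig (simpleRoot n j) = 0 := by
  rw [simpleRoot, ← sigHom_apply, map_sub]
  simp [sig_single]

theorem dfk_simpleRoot (j : Fin (n - 1)) : Dfk (simpleRoot n j) = 1 := by
  rw [simpleRoot, ← dfkHom_apply, map_sub]
  simp only [dfkHom_apply, dfk_single]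
  push_cast
  ring

theorem dfk_sum_simpleRoot {m : ℕ} (c : Fin m → Fin (n - 1)) :
    Dfk (∑ k, simpleRoot n (c k)) = m := by
  rw [← dfkHom_apply, map_sum]
  simp [dfk_simpleRoot]

theorem sig_eq_zero_of_mem_closure_simpleRoot {x : Fin n → ℤ}
    (hx : x ∈ AddSubmonoid.closure (Set.range (simpleRoot n))) : Sig x = 0 := by
  rw [← sigHom_apply, ← AddMonoidHom.mem_mker]
  refine AddSubmonoid.closure_le.2 ?_ hx
  rintro _ ⟨j, rfl⟩
  exact sig_simpleRoot j

theorem single_sub_single_mem_closure_simpleRoot {s t : Fin n} (hst : s < t) :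
    (Pi.single s 1 - Pi.single t 1 : Fin n → ℤ) ∈
      AddSubmonoid.closure (Set.range (simpleRoot n)) := by
  obtain ⟨k, hk⟩ : ∃ k, t.val = s.val + k + 1 := ⟨t - s - 1, by omega⟩
  induction k generalizing t with
  | zero =>
    rw [← simpleRoot_eq ⟨s, by omega⟩ rfl hk]
    exact AddSubmonoid.subset_closure ⟨_, rfl⟩
  | succ k ih =>
    have ht := t.isLt
    let t' : Fin n := ⟨s + k + 1, by omega⟩
    have htelescope : (Pi.single s 1 - Pi.single t 1 : Fin n → ℤ) =
        (Pi.single s 1 - Pi.single t' 1) + simpleRoot n ⟨s + k + 1, by omega⟩ := by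
      rw [simpleRoot_eq ⟨s + k + 1, by omega⟩ (a := t') rfl hk]
      abel
    rw [htelescope]
    exact add_mem (ih (Fin.mk_lt_mk.2 (by omega)) rfl) (AddSubmonoid.subset_closure ⟨_, rfl⟩)

theorem mem_closure_simpleRoot_of_mem_Lam {x : Fin n → ℤ} (hx : x ∈ Lam n) (hsig : Sig x = 0) :
    x ∈ AddSubmonoid.closure (Set.range (simpleRoot n)) := by
  let R := AddSubmonoid.closure (Set.range (simpleRoot n))
  let P : AddSubmonoid (Fin n → ℤ) :=
    { carrier := {x | Sig x < 0 ∨ x ∈ R}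
      zero_mem' := Or.inr R.zero_mem
      add_mem' := by
        rintro a b ha hb
        simp only [Set.mem_ofPred_eq, ← sigHom_apply, map_add] at ha hb ⊢
        have hR {y} (hy : y ∈ R) : sigHom n y = 0 := sig_eq_zero_of_mem_closure_simpleRoot hy
        rcases ha with ha | ha <;> rcases hb with hb | hb
        · exact Or.inl (by omega)
        · exact Or.inl (by rw [hR hb]; omega)
        · exact Or.inl (by rw [hR ha]; omega)
        · exact Or.inr (R.add_mem ha hb) }
  have hLP : Lam n ≤ P := by
    refine AddSubmonoid.closure_le.2 ?_
    rintro _ (⟨s, t, hst, rfl⟩ | ⟨j, rfl⟩)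
    · exact Or.inr (single_sub_single_mem_closure_simpleRoot hst)
    · left
      rw [← sigHom_apply, map_neg, sigHom_apply, sig_single]
      norm_num
  exact (hLP hx).resolve_left hsig.not_lt

end SimpleRoots

theorem card_lattice_points_with_defect_general (n : ℕ) (m : ℕ) :
    {i : Fin n → ℤ | i ∈ Lam n ∧ Sig i = 0 ∧ Dfk i = m}.Finite ∧
      Nat.card {i : Fin n → ℤ | i ∈ Lam n ∧ Sig i = 0 ∧ Dfk i = m} ≤ (n - 1) ^ m := by
  let word : (Fin m → Fin (n - 1)) → (Fin n → ℤ) := fun c => ∑ k, simpleRoot n (c k)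
  have hsub : {i : Fin n → ℤ | i ∈ Lam n ∧ Sig i = 0 ∧ Dfk i = m} ⊆ Set.range word := by
    rintro x ⟨hx, hsig, hdfk⟩
    obtain ⟨m', c, rfl⟩ := AddSubmonoid.exists_fin_sum_eq_of_mem_closure_range
      (mem_closure_simpleRoot_of_mem_Lam hx hsig)
    obtain rfl : m' = m := by exact_mod_cast (dfk_sum_simpleRoot c).symm.trans hdfk
    exact ⟨c, rfl⟩
  refine ⟨(Set.finite_range word).subset hsub, ?_⟩
  calc Nat.card {i : Fin n → ℤ | i ∈ Lam n ∧ Sig i = 0 ∧ Dfk i = m}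
      ≤ Nat.card (Set.range word) := Nat.card_mono (Set.finite_range word) hsub
    _ ≤ Nat.card (Fin m → Fin (n - 1)) := Finite.card_range_le word
    _ = (n - 1) ^ m := by simp

/-- **Lemma 5.6 (1)**: the set `{i ∈ Λ⁺ : Σi = 0, D(i) = m}` is finite of cardinality at most
`(n−1)^m`. -/
theorem card_lattice_points_with_defect (n : ℕ) (hn : 1 ≤ n) (m : ℕ) :
    {i : Fin n → ℤ | i ∈ Lam n ∧ Sig i = 0 ∧ Dfk i = m}.Finite ∧
      Nat.card {i : Fin n → ℤ | i ∈ Lam n ∧ Sig i = 0 ∧ Dfk i = m} ≤ (n - 1) ^ m :=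
  card_lattice_points_with_defect_general n m
end

section
/- Let n ≥ 1 and s ≥ 1 be integers and let i ∈ Λ⁺ satisfy Σi = 0. Then the set { (i_1, …, i_s) ∈ (Λ⁺)^s : i_1 + ⋯ + i_s = i } is finite and has cardinality at most s^{D(i)}. -/
/-!
Every generator of `Λ⁺`, hence every element, has nonpositive sum over each upper set of
indices; in particular `Σx ≤ 0` and `Σx ≤ P_k(x)` for the partial sums `P_k`. So if
`i = i_1 + ⋯ + i_s` with `Σi = 0`, every summand has `Σi_j = 0` and nonnegative partial sums.
A vector is determined by its partial sums, so a decomposition is determined by how each `P_k(i)`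
is split into `s` nonnegative parts. There are at most `s^{P_k(i)}` such splittings (each counts
the letters of some word of length `P_k(i)` over an alphabet of size `s`), and `Σ_k P_k(i) = D(i)`.
-/

open Finset

theorem card_fun_sum_eq_le_pow {ι : Type*} [Fintype ι] [DecidableEq ι] (C : ℕ) :
    Nat.card {P : ι → ℕ // ∑ j, P j = C} ≤ Fintype.card ι ^ C := by
  have hsurj : Function.Surjective (Sym.ofVector : List.Vector ι C → Sym ι C) := by
    rintro ⟨m, hm⟩
    induction m using Quotient.inductionOn with
    | h l => exact ⟨⟨l, hm⟩, rfl⟩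
  calc Nat.card {P : ι → ℕ // ∑ j, P j = C}
      = Nat.card (Sym ι C) := (Nat.card_congr (Sym.equivNatSumOfFintype ι C)).symm
    _ ≤ Nat.card (List.Vector ι C) := Nat.card_le_card_of_surjective _ hsurj
    _ = Fintype.card ι ^ C := by simp [Nat.card_eq_fintype_card, card_vector]

instance {ι : Type*} [Fintype ι] [DecidableEq ι] (C : ℕ) : Finite {P : ι → ℕ // ∑ j, P j = C} :=
  .of_equiv _ (Sym.equivNatSumOfFintype ι C)

theorem sum_upperSet_nonpos_of_mem_lam {n : ℕ} {x : Fin n → ℤ} (hx : x ∈ Lam n)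
    {U : Finset (Fin n)} (hU : IsUpperSet (U : Set (Fin n))) : ∑ j ∈ U, x j ≤ 0 := by
  induction hx using AddSubmonoid.closure_induction with
  | mem x h =>
    rcases h with ⟨a, b, hab, rfl⟩ | ⟨j, rfl⟩
    · have : a ∈ U → b ∈ U := fun ha => hU hab.le ha
      simp only [Pi.sub_apply, sum_sub_distrib, Pi.single_apply, sum_ite_eq']
      split_ifs <;> simp_all
    · simp only [Pi.neg_apply, sum_neg_distrib, Pi.single_apply, sum_ite_eq']
      split_ifs <;> simp
  | zero => simp
  | add x y _ _ hx hy => simpa [sum_add_distrib] using add_nonpos hx hy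

/-- `psum x k = x_0 + ⋯ + x_k`: with the paper's 1-based indices, the `(k+1)`-st partial sum. -/
def psum {n : ℕ} (x : Fin n → ℤ) (k : Fin n) : ℤ := ∑ j ∈ Iic k, x j

theorem sig_nonpos_of_mem_lam {n : ℕ} {x : Fin n → ℤ} (hx : x ∈ Lam n) : Sig x ≤ 0 := by
  simpa [Sig] using sum_upperSet_nonpos_of_mem_lam hx (U := univ) (by simp [isUpperSet_univ])

theorem sig_le_psum_of_mem_lam {n : ℕ} {x : Fin n → ℤ} (hx : x ∈ Lam n) (k : Fin n) :
    Sig x ≤ psum x k := by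
  have htail := sum_upperSet_nonpos_of_mem_lam hx (U := Ioi k) (by simpa using isUpperSet_Ioi k)
  have hsplit : Sig x = psum x k + ∑ j ∈ Ioi k, x j := by
    rw [Sig, ← sum_filter_add_sum_filter_not univ (· ≤ k), filter_ge_eq_Iic, psum]
    simp only [not_le, filter_lt_eq_Ioi]
  linarith

theorem psum_injective {n : ℕ} : Function.Injective (psum (n := n)) := by
  intro x y h
  funext k
  induction k using WellFoundedLT.induction with
  | ind k ih =>
    have hk := congrFun h k
    simp only [psum, ← Iio_insert, sum_insert notMem_Iio_self] at hk
    rw [sum_congr rfl fun j hj => ih j (mem_Iio.1 hj)] at hk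
    linarith

theorem dfk_eq_sum_psum {n : ℕ} (x : Fin n → ℤ) : Dfk x = ∑ k, psum x k := by
  simp only [Dfk, psum]
  rw [sum_comm' (t' := univ) (s' := Ici) fun k j => by simp [and_comm]]
  refine sum_congr rfl fun j _ => ?_
  rw [sum_const, Fin.card_Ici, nsmul_eq_mul, Nat.cast_sub j.isLt.le]

theorem sig_eq_zero_of_sum_eq {n : ℕ} {ι : Type*} [Fintype ι] {v : ι → Fin n → ℤ}
    (hv : ∀ j, v j ∈ Lam n) (h0 : Sig (∑ j, v j) = 0) (j : ι) : Sig (v j) = 0 := by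
  have hsum : ∑ j, Sig (v j) = 0 := by
    simp only [← h0, Sig, Finset.sum_apply]; exact sum_comm
  exact (sum_eq_zero_iff_of_nonpos fun j _ => sig_nonpos_of_mem_lam (hv j)).1 hsum j (mem_univ j)

def decompositions {n : ℕ} (s : ℕ) (i : Fin n → ℤ) : Set (Fin s → Fin n → ℤ) :=
  {v | (∀ j, v j ∈ Lam n) ∧ ∑ j, v j = i}

section decompositions

variable {n s : ℕ} {i : Fin n → ℤ}

theorem psum_nonneg_of_mem_decompositions (h0 : Sig i = 0) {v : Fin s → Fin n → ℤ}
    (hv : v ∈ decompositions s i) (j : Fin s) (k : Fin n) : 0 ≤ psum (v j) k := by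
  rw [← sig_eq_zero_of_sum_eq hv.1 (hv.2 ▸ h0) j]
  exact sig_le_psum_of_mem_lam (hv.1 j) k

theorem sum_psum_of_mem_decompositions {v : Fin s → Fin n → ℤ} (hv : v ∈ decompositions s i)
    (k : Fin n) : ∑ j, psum (v j) k = psum i k := by
  simp only [← hv.2, psum, Finset.sum_apply]
  exact sum_comm

def psumSplit (h0 : Sig i = 0) (v : decompositions s i) (k : Fin n) :
    {P : Fin s → ℕ // ∑ j, P j = (psum i k).toNat} :=
  ⟨fun j => (psum (v.1 j) k).toNat, by
    have hv := psum_nonneg_of_mem_decompositions h0 v.2 (k := k)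
    have hi : 0 ≤ psum i k := sum_psum_of_mem_decompositions v.2 k ▸ sum_nonneg fun j _ => hv j
    zify
    simp only [Int.toNat_of_nonneg, hv, hi]
    exact sum_psum_of_mem_decompositions v.2 k⟩

theorem psumSplit_injective (h0 : Sig i = 0) : Function.Injective (psumSplit (s := s) h0) := by
  intro v w h
  refine Subtype.ext (funext fun j => psum_injective (funext fun k => ?_))
  have := congrArg (fun P => (P k).1 j) h
  simp only [psumSplit] at this
  have := psum_nonneg_of_mem_decompositions h0 v.2 j k
  have := psum_nonneg_of_mem_decompositions h0 w.2 j k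
  omega

end decompositions

theorem card_decompositions_le_general (n : ℕ) (s : ℕ)
    (i : Fin n → ℤ) (hi : i ∈ Lam n) (h0 : Sig i = 0) :
    {v : Fin s → (Fin n → ℤ) | (∀ j, v j ∈ Lam n) ∧ ∑ j, v j = i}.Finite ∧
      (Nat.card {v : Fin s → (Fin n → ℤ) | (∀ j, v j ∈ Lam n) ∧ ∑ j, v j = i} : ℚ)
        ≤ (s : ℚ) ^ Dfk i := by
  change (decompositions s i).Finite ∧ (Nat.card (decompositions s i) : ℚ) ≤ _
  have hinj := psumSplit_injective (s := s) h0
  have : Finite (decompositions s i) := .of_injective _ hinj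
  refine ⟨Set.toFinite _, ?_⟩
  have hcard : Nat.card (decompositions s i) ≤ s ^ ∑ k, (psum i k).toNat := calc
    _ ≤ ∏ k, Nat.card {P : Fin s → ℕ // ∑ j, P j = (psum i k).toNat} :=
      (Nat.card_le_card_of_injective _ hinj).trans_eq Nat.card_pi
    _ ≤ ∏ k, s ^ (psum i k).toNat := prod_le_prod' fun k _ => by
      simpa using card_fun_sum_eq_le_pow (ι := Fin s) (psum i k).toNat
    _ = s ^ ∑ k, (psum i k).toNat := prod_pow_eq_pow_sum _ _ _
  have hpsum (k : Fin n) : ((psum i k).toNat : ℤ) = psum i k :=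
    Int.toNat_of_nonneg (h0 ▸ sig_le_psum_of_mem_lam hi k)
  rw [dfk_eq_sum_psum, ← sum_congr rfl fun k _ => hpsum k]
  exact_mod_cast hcard

/-- **Lemma 5.6 (2)**: for `i ∈ Λ⁺` with `Σi = 0`, the set of `s`-tuples
`(i_1, …, i_s) ∈ (Λ⁺)^s` with `i_1 + ⋯ + i_s = i` is finite of cardinality at most
`s^{D(i)}`. -/
theorem card_decompositions_le (n : ℕ) (hn : 1 ≤ n) (s : ℕ) (hs : 1 ≤ s)
    (i : Fin n → ℤ) (hi : i ∈ Lam n) (h0 : Sig i = 0) :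
    {v : Fin s → (Fin n → ℤ) | (∀ j, v j ∈ Lam n) ∧ ∑ j, v j = i}.Finite ∧
      (Nat.card {v : Fin s → (Fin n → ℤ) | (∀ j, v j ∈ Lam n) ∧ ∑ j, v j = i} : ℚ)
        ≤ (s : ℚ) ^ Dfk i :=
  card_decompositions_le_general n s i hi h0
end

section
/- For every i ∈ ℤ^n, the coefficient of z^i in A is a polynomial in d and h in which every monomial d^j h^m occurring with nonzero coefficient satisfies j ≤ m; moreover this coefficient of z^i is zero whenever i ∉ Λ⁺. In particular, for every m ≥ 0 the coefficient of z^i d^m h^m in A vanishes unless i ∈ Λ⁺. -/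
noncomputable section
open scoped Classical

/-- Priority bump to avoid a stuck typeclass search. -/
instance (priority := 10000) (n : ℕ) : WellFoundedLT (Fin n) := inferInstance

/-- The base field `F = ℚ(d,h)`, realized as the fraction field of `ℚ[d,h]`. -/
abbrev Fdh : Type := FractionRing (MvPolynomial (Fin 2) ℚ)

/-- The indeterminate `d`. -/
def dvar : Fdh := algebraMap (MvPolynomial (Fin 2) ℚ) Fdh (MvPolynomial.X 0)

/-- The indeterminate `h`. -/
def hvar : Fdh := algebraMap (MvPolynomial (Fin 2) ℚ) Fdh (MvPolynomial.X 1)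

/-- Value group for the iterated Laurent series field: `ℤ^n` ordered lexicographically,
with the exponent of `z_n` most significant. -/
abbrev Gam (n : ℕ) : Type := Lex (Fin n → ℤ)

/-- The iterated Laurent series field `K_F = F((z_n^{-1}))((z_{n-1}^{-1}))⋯((z_2^{-1}))((z_1))`,
realized as a Hahn series field; supports are well-ordered with respect to the monomial order
corresponding to the region `1 ≪ |z_1| ≪ ⋯ ≪ |z_n|`. -/
abbrev KK (n : ℕ) : Type := HahnSeries (Gam n) Fdh

/-- The Hahn exponent attached to a z-monomial exponent vector `i` (exponent `i j` on `z_{j+1}`);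
larger monomials get smaller Hahn exponents, and `z_n` dominates. -/
def gamOf {n : ℕ} (i : Fin n → ℤ) : Gam n := toLex fun k => -(i k.rev)

/-- The variable `z_{j+1}` as an element of `K_F`. -/
def zv {n : ℕ} (j : Fin n) : KK n := HahnSeries.single (gamOf (Pi.single j 1)) 1

/-- The coefficient of `z^i = z_1^{i 0} ⋯ z_n^{i (n-1)}` of an iterated Laurent series. -/
def zcoeff {n : ℕ} (i : Fin n → ℤ) (x : KK n) : Fdh := x.coeff (gamOf i)

/-- `z_{[s..t]} = z_s + ⋯ + z_t` (1-based indices; `0` when `s > t`). -/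
def zS (n : ℕ) (s t : ℕ) : KK n :=
  ∑ j ∈ Finset.univ.filter (fun j : Fin n => s ≤ j.val + 1 ∧ j.val + 1 ≤ t), zv j

/-- `A⁰ = ∏_{j=1}^n (z_{[1..j]} + d·h)/z_j`. -/
def A0 (n : ℕ) : KK n :=
  ∏ j : Fin n, (zS n 1 (j.val + 1) + HahnSeries.C (dvar * hvar)) / zv j

/-- `A¹ = ∏_{1 ≤ t₁ < t₂ ≤ n} z_{[t₁..t₂]} / (z_{[t₁+1..t₂]} − z_{t₁})`. -/
def A1 (n : ℕ) : KK n :=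
  ∏ p ∈ Finset.univ.filter (fun p : Fin n × Fin n => p.1 < p.2),
    zS n (p.1.val + 1) (p.2.val + 1) / (zS n (p.1.val + 2) (p.2.val + 1) - zv p.1)

/-- `A² = ∏_{j=1}^n ( z_j/(z_{[1..j]} + h) )^{n+2}`. -/
def A2 (n : ℕ) : KK n :=
  ∏ j : Fin n, (zv j / (zS n 1 (j.val + 1) + HahnSeries.C hvar)) ^ (n + 2)

/-- `A = A⁰ · A¹ · A²`. -/
def AA (n : ℕ) : KK n := A0 n * A1 n * A2 n

/-- The coefficient of `d^j h^m` of an element of `F = ℚ(d,h)` which is a polynomial in `d, h`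
(and `0` if it is not a polynomial).  This is well defined since the algebra map from
`ℚ[d,h]` to its fraction field is injective. -/
def fCoeff (x : Fdh) (j m : ℕ) : ℚ :=
  if hq : ∃ q : MvPolynomial (Fin 2) ℚ, algebraMap (MvPolynomial (Fin 2) ℚ) Fdh q = x
  then MvPolynomial.coeff (Finsupp.single 0 j + Finsupp.single 1 m) hq.choose
  else 0

/-- `A_{z^i d^j h^m}`: the coefficient of `z^i d^j h^m` in `A`. -/
def Acf (n : ℕ) (i : Fin n → ℤ) (j m : ℕ) : ℚ := fCoeff (zcoeff i (AA n)) j m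

/-- `|a| = a_1 + ⋯ + a_n`. -/
def absA {n : ℕ} (a : Fin n → ℚ) : ℚ := ∑ j, a j

/-- `S_{n,δ} = 2 − 2n² + n²(n+2)δ`. -/
def Snd (n : ℕ) (δ : ℚ) : ℚ := 2 - 2 * n ^ 2 + n ^ 2 * (n + 2) * δ

/-- A rational constant, as an element of `K_F`. -/
def cQ {n : ℕ} (q : ℚ) : KK n := HahnSeries.C (q : Fdh)

/-- The numerator `N = (a_1z_1+⋯+a_nz_n+2|a|h)^{n²−1}·(a_1z_1+⋯+a_nz_n+S_{n,δ}|a|h−n²δ|a|dh)`. -/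
def Nnum (n : ℕ) (a : Fin n → ℚ) (δ : ℚ) : KK n :=
  (∑ j, cQ (a j) * zv j + cQ (2 * absA a) * HahnSeries.C hvar) ^ (n ^ 2 - 1) *
    (∑ j, cQ (a j) * zv j + cQ (Snd n δ * absA a) * HahnSeries.C hvar
      - cQ ((n : ℚ) ^ 2 * δ * absA a) * HahnSeries.C (dvar * hvar))

/-- `B = N/(z_1⋯z_n)^n`. -/
def BB (n : ℕ) (a : Fin n → ℚ) (δ : ℚ) : KK n := Nnum n a δ / (∏ j : Fin n, zv j) ^ n

/-- The special choice `a_i = n^{8(n+1−i)}`, `i = 1, …, n`. -/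
def astd (n : ℕ) : Fin n → ℚ := fun t => (n : ℚ) ^ (8 * (n - t.val))

/-- The special choice `δ = 1/(2·n^{8n})`. -/
def δstd (n : ℕ) : ℚ := 1 / (2 * (n : ℚ) ^ (8 * n))

/-!
Every factor of `A` becomes a quotient `a / b` of Hahn series whose coefficients are polynomials
in `d, h` built from monomials `d^j h^m` with `j ≤ m`, and whose exponents lie in the image of
`Λ⁺`, once numerator and denominator are divided by the largest variable `z_j` that occurs; the
denominator then has constant term `1`. Series of this kind form a subring, and it is closed under
inverting elements with constant term `1`: as `Λ⁺` maps to nonnegative exponents, the geometric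
series in `1 - b` converges inside it.
-/

namespace HahnSeries

section RestrictedSubring

variable {Γ R : Type*} [AddCommMonoid Γ] [PartialOrder Γ] [IsOrderedCancelAddMonoid Γ] [CommRing R]
  (S : Subring R) (M : AddSubmonoid Γ)

def restrictedSubring : Subring (HahnSeries Γ R) where
  carrier := {x | (∀ γ, x.coeff γ ∈ S) ∧ x.support ⊆ M}
  zero_mem' := ⟨fun _ => zero_mem S, by simp⟩
  one_mem' := by
    rw [← single_zero_one]
    refine ⟨fun γ => ?_, fun γ hγ => eq_of_mem_support_single hγ ▸ zero_mem M⟩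
    rw [coeff_single]
    split_ifs
    exacts [one_mem S, zero_mem S]
  add_mem' ha hb := ⟨fun γ => add_mem (ha.1 γ) (hb.1 γ),
    (support_add_subset _ _).trans (Set.union_subset ha.2 hb.2)⟩
  neg_mem' ha := ⟨fun γ => neg_mem (ha.1 γ), support_neg.trans_subset ha.2⟩
  mul_mem' ha hb := by
    refine ⟨fun γ => ?_, support_mul_subset.trans ?_⟩
    · rw [coeff_mul]
      exact sum_mem fun ij _ => mul_mem (ha.1 ij.1) (hb.1 ij.2)
    · rintro _ ⟨a, ha', b, hb', rfl⟩
      exact add_mem (ha.2 ha') (hb.2 hb')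

variable {S M}

theorem mem_restrictedSubring {x : HahnSeries Γ R} :
    x ∈ restrictedSubring S M ↔ (∀ γ, x.coeff γ ∈ S) ∧ x.support ⊆ M :=
  Iff.rfl

theorem single_mem_restrictedSubring {γ : Γ} {c : R} (hγ : γ ∈ M) (hc : c ∈ S) :
    single γ c ∈ restrictedSubring S M := by
  refine ⟨fun β => ?_, fun β hβ => eq_of_mem_support_single hβ ▸ hγ⟩
  rw [coeff_single]
  split_ifs
  exacts [hc, zero_mem S]

end RestrictedSubring

section Inverse

variable {Γ R : Type*} [AddCommMonoid Γ] [LinearOrder Γ] [IsOrderedCancelAddMonoid Γ] [CommRing R]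
  {S : Subring R} {M : AddSubmonoid Γ}

theorem exists_mul_eq_one_mem_restrictedSubring (hM : ∀ γ ∈ M, 0 ≤ γ) {x : HahnSeries Γ R}
    (hx : x ∈ restrictedSubring S M) (hx0 : x.coeff 0 = 1) :
    ∃ y ∈ restrictedSubring S M, x * y = 1 := by
  set u := 1 - x
  have hu : u ∈ restrictedSubring S M := sub_mem (one_mem _) hx
  have hpow (k : ℕ) := mem_restrictedSubring.1 (pow_mem hu k)
  have hu0 : 0 < u.orderTop := by
    rcases eq_or_ne u 0 with h | h
    · simp [h]
    have horder : u.coeff u.order ≠ 0 := mt coeff_order_eq_zero.1 h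
    rw [zero_lt_orderTop_iff h]
    refine (hM _ ((mem_restrictedSubring.1 hu).2 horder)).lt_of_ne fun h0 => horder ?_
    rw [← h0, coeff_sub, coeff_one, if_pos rfl, hx0, sub_self]
  refine ⟨(SummableFamily.powers u).hsum, mem_restrictedSubring.2 ⟨fun γ => ?_, ?_⟩, ?_⟩
  · rw [SummableFamily.coeff_hsum_eq_sum, SummableFamily.coe_powers hu0]
    exact sum_mem fun k _ => (hpow k).1 γ
  · refine SummableFamily.support_hsum_subset.trans (Set.iUnion_subset fun k => ?_)
    rw [SummableFamily.coe_powers hu0]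
    exact (hpow k).2
  · simpa [u] using SummableFamily.one_sub_self_mul_hsum_powers hu0

end Inverse

section Field

variable {Γ R : Type*} [AddCommGroup Γ] [LinearOrder Γ] [IsOrderedAddMonoid Γ] [Field R]
  {S : Subring R} {M : AddSubmonoid Γ}

theorem div_mem_restrictedSubring (hM : ∀ γ ∈ M, 0 ≤ γ) {a b w : HahnSeries Γ R}
    (ha : a * w ∈ restrictedSubring S M) (hb : b * w ∈ restrictedSubring S M)
    (hb0 : (b * w).coeff 0 = 1) : a / b ∈ restrictedSubring S M := by
  obtain ⟨y, hy, hby⟩ := exists_mul_eq_one_mem_restrictedSubring hM hb hb0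
  have hw : w ≠ 0 := right_ne_zero_of_mul (left_ne_zero_of_mul_eq_one hby)
  rw [← mul_div_mul_right a b hw, div_eq_mul_inv, inv_eq_of_mul_eq_one_right hby]
  exact mul_mem ha hy

end Field

end HahnSeries

open Finset HahnSeries

namespace MvPolynomial

variable {σ R : Type*} [CommSemiring R]

def exponentSubalgebra (P : AddSubmonoid (σ →₀ ℕ)) : Subalgebra R (MvPolynomial σ R) where
  carrier := {p | ↑p.support ⊆ (P : Set (σ →₀ ℕ))}
  mul_mem' {p q} hp hq := by
    classical
    intro m hm
    obtain ⟨a, ha, b, hb, rfl⟩ := Finset.mem_add.1 (support_mul p q hm)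
    exact add_mem (hp ha) (hq hb)
  add_mem' {p q} hp hq := by
    classical
    intro m hm
    rcases Finset.mem_union.1 (support_add hm) with h | h
    exacts [hp h, hq h]
  algebraMap_mem' r m hm := by
    rw [Finset.mem_singleton.1 (support_monomial_subset hm)]
    exact zero_mem P

theorem monomial_mem_exponentSubalgebra {P : AddSubmonoid (σ →₀ ℕ)} {s : σ →₀ ℕ} (hs : s ∈ P)
    (a : R) : monomial s a ∈ exponentSubalgebra (R := R) P := fun _ hm =>
  Finset.mem_singleton.1 (support_monomial_subset hm) ▸ hs

end MvPolynomial

def dLeHExponents : AddSubmonoid (Fin 2 →₀ ℕ) where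
  carrier := {m | m 0 ≤ m 1}
  zero_mem' := by simp
  add_mem' {a b} (ha : a 0 ≤ a 1) (hb : b 0 ≤ b 1) := by
    show (a + b) 0 ≤ (a + b) 1
    simpa only [Finsupp.add_apply] using add_le_add ha hb

def dLeHPolys : Subring Fdh :=
  (MvPolynomial.exponentSubalgebra (R := ℚ) dLeHExponents).toSubring.map
    (algebraMap (MvPolynomial (Fin 2) ℚ) Fdh)

theorem hvar_mem_dLeHPolys : hvar ∈ dLeHPolys :=
  ⟨MvPolynomial.X 1, MvPolynomial.monomial_mem_exponentSubalgebra (by simp [dLeHExponents]) 1, rfl⟩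

theorem dvar_mul_hvar_mem_dLeHPolys : dvar * hvar ∈ dLeHPolys := by
  refine ⟨MvPolynomial.monomial (Finsupp.single 0 1 + Finsupp.single 1 1) 1,
    MvPolynomial.monomial_mem_exponentSubalgebra (by simp [dLeHExponents]) 1, ?_⟩
  rw [dvar, hvar, ← map_mul, MvPolynomial.X, MvPolynomial.X, MvPolynomial.monomial_mul, mul_one]

def gamOfHom (n : ℕ) : (Fin n → ℤ) →+ Gam n :=
  AddMonoidHom.mk' gamOf fun i j => congrArg toLex (funext fun k => neg_add (i k.rev) (j k.rev))

@[simp]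
theorem gamOfHom_apply {n : ℕ} (i : Fin n → ℤ) : gamOfHom n i = gamOf i := rfl

theorem gamOf_injective {n : ℕ} : Function.Injective (gamOf (n := n)) := fun i i' h =>
  funext fun j => by simpa [gamOf] using congrFun (congrArg ofLex h) j.rev

theorem gamOf_eq_zero_iff {n : ℕ} {i : Fin n → ℤ} : gamOf i = 0 ↔ i = 0 :=
  gamOf_injective.eq_iff' (map_zero (gamOfHom n))

theorem single_sub_single_mem_Lam {n : ℕ} {s t : Fin n} (h : s ≤ t) :
    Pi.single s 1 - Pi.single t 1 ∈ Lam n := by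
  rcases h.lt_or_eq with h | rfl
  · exact AddSubmonoid.subset_closure (Or.inl ⟨s, t, h, rfl⟩)
  · rw [sub_self]
    exact zero_mem _

theorem neg_single_mem_Lam {n : ℕ} (j : Fin n) : -Pi.single j 1 ∈ Lam n :=
  AddSubmonoid.subset_closure (Or.inr ⟨j, rfl⟩)

theorem gamOf_single_sub_single_pos {n : ℕ} {s t : Fin n} (h : s < t) :
    0 < gamOf (Pi.single s 1 - Pi.single t 1 : Fin n → ℤ) := by
  -- `gamOf` reverses and negates, so the first nonzero entry is `+1`, at position `t.rev`
  refine ⟨t.rev, fun k hk => ?_, ?_⟩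
  · have h1 : t < k.rev := Fin.lt_rev_iff.mpr hk
    simp [gamOf, Pi.single_apply, h1.ne', (h.trans h1).ne']
    rfl
  · simp [gamOf, h.ne]
    exact zero_lt_one

theorem gamOf_neg_single_pos {n : ℕ} (j : Fin n) : 0 < gamOf (-Pi.single j 1 : Fin n → ℤ) := by
  refine ⟨j.rev, fun k hk => ?_, ?_⟩
  · have h1 : j < k.rev := Fin.lt_rev_iff.mpr hk
    simp [gamOf, Pi.single_apply, h1.ne']
    rfl
  · simp [gamOf]
    exact zero_lt_one

theorem gamOf_nonneg_of_mem_Lam {n : ℕ} {i : Fin n → ℤ} (hi : i ∈ Lam n) : 0 ≤ gamOf i := by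
  induction hi using AddSubmonoid.closure_induction with
  | mem x hx =>
    rcases hx with ⟨s, t, hst, rfl⟩ | ⟨j, rfl⟩
    exacts [(gamOf_single_sub_single_pos hst).le, (gamOf_neg_single_pos j).le]
  | zero => exact (map_zero (gamOfHom n)).ge
  | add x y _ _ hx hy =>
    rw [← gamOfHom_apply, map_add]
    exact add_nonneg hx hy

def lamSeries (n : ℕ) : Subring (KK n) :=
  restrictedSubring dLeHPolys ((Lam n).map (gamOfHom n))

theorem nonneg_of_mem_map_Lam {n : ℕ} : ∀ γ ∈ (Lam n).map (gamOfHom n), 0 ≤ γ := by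
  rintro _ ⟨i, hi, rfl⟩
  exact gamOf_nonneg_of_mem_Lam hi

theorem zv_ne_zero {n : ℕ} (j : Fin n) : zv j ≠ 0 :=
  single_ne_zero one_ne_zero

theorem zv_inv {n : ℕ} (j : Fin n) : (zv j)⁻¹ = single (gamOf (-Pi.single j 1)) 1 := by
  refine inv_eq_of_mul_eq_one_right ?_
  rw [zv, single_mul_single, ← gamOfHom_apply, ← gamOfHom_apply, ← map_add, add_neg_cancel,
    map_zero, mul_one, single_zero_one]

theorem zv_mul_zv_inv {n : ℕ} (t j : Fin n) :
    zv t * (zv j)⁻¹ = single (gamOf (Pi.single t 1 - Pi.single j 1)) 1 := by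
  rw [zv_inv, zv, single_mul_single, ← gamOfHom_apply, ← gamOfHom_apply, ← map_add,
    ← sub_eq_add_neg, mul_one, gamOfHom_apply]

theorem C_mul_zv_inv {n : ℕ} (c : Fdh) (j : Fin n) :
    C c * (zv j)⁻¹ = single (gamOf (-Pi.single j 1)) c := by
  rw [zv_inv, C_apply, single_mul_single, zero_add, mul_one]

theorem zv_mul_zv_inv_mem {n : ℕ} {t j : Fin n} (h : t ≤ j) : zv t * (zv j)⁻¹ ∈ lamSeries n := by
  rw [zv_mul_zv_inv]
  exact single_mem_restrictedSubring ⟨_, single_sub_single_mem_Lam h, rfl⟩ (one_mem _)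

theorem C_mul_zv_inv_mem {n : ℕ} {c : Fdh} (hc : c ∈ dLeHPolys) (j : Fin n) :
    C c * (zv j)⁻¹ ∈ lamSeries n := by
  rw [C_mul_zv_inv]
  exact single_mem_restrictedSubring ⟨_, neg_single_mem_Lam j, rfl⟩ hc

theorem zS_mul_zv_inv_mem {n s t : ℕ} {j : Fin n} (h : t ≤ j.val + 1) :
    zS n s t * (zv j)⁻¹ ∈ lamSeries n := by
  rw [zS, sum_mul]
  refine sum_mem fun u hu => zv_mul_zv_inv_mem ?_
  rw [mem_filter] at hu
  exact Fin.le_def.2 (by omega)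

theorem coeff_zero_zv_mul_zv_inv_of_ne {n : ℕ} {t j : Fin n} (h : t ≠ j) :
    (zv t * (zv j)⁻¹).coeff 0 = 0 := by
  rw [zv_mul_zv_inv, coeff_single_of_ne]
  intro h0
  simpa [h] using congrFun (gamOf_eq_zero_iff.1 h0.symm) t

theorem coeff_zero_zS_mul_zv_inv {n s t : ℕ} {j : Fin n} (hs : s ≤ j.val + 1) (ht : j.val + 1 ≤ t) :
    (zS n s t * (zv j)⁻¹).coeff 0 = 1 := by
  rw [zS, sum_mul, coeff_sum, sum_eq_single_of_mem j (by simp [hs]; omega)]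
  · rw [mul_inv_cancel₀ (zv_ne_zero j), coeff_one, if_pos rfl]
  · exact fun u _ hu => coeff_zero_zv_mul_zv_inv_of_ne hu

theorem coeff_zero_C_mul_zv_inv {n : ℕ} (c : Fdh) (j : Fin n) : (C c * (zv j)⁻¹).coeff 0 = 0 := by
  rw [C_mul_zv_inv, coeff_single_of_ne]
  intro h0
  simpa using congrFun (gamOf_eq_zero_iff.1 h0.symm) j

theorem div_mem_lamSeries {n : ℕ} {a b : KK n} (w : KK n) (ha : a * w ∈ lamSeries n)
    (hb : b * w ∈ lamSeries n) (hb0 : (b * w).coeff 0 = 1) : a / b ∈ lamSeries n :=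
  div_mem_restrictedSubring nonneg_of_mem_map_Lam ha hb hb0

theorem A0_mem_lamSeries (n : ℕ) : A0 n ∈ lamSeries n := by
  refine prod_mem fun j _ => div_mem_lamSeries (zv j)⁻¹ ?_ ?_ ?_
  · rw [add_mul]
    exact add_mem (zS_mul_zv_inv_mem le_rfl) (C_mul_zv_inv_mem dvar_mul_hvar_mem_dLeHPolys j)
  · rw [mul_inv_cancel₀ (zv_ne_zero j)]
    exact one_mem _
  · rw [mul_inv_cancel₀ (zv_ne_zero j), coeff_one, if_pos rfl]

theorem A1_mem_lamSeries (n : ℕ) : A1 n ∈ lamSeries n := by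
  refine prod_mem fun p hp => ?_
  replace hp : p.1 < p.2 := (mem_filter.1 hp).2
  refine div_mem_lamSeries (zv p.2)⁻¹ (zS_mul_zv_inv_mem le_rfl) ?_ ?_
  · rw [sub_mul]
    exact sub_mem (zS_mul_zv_inv_mem le_rfl) (zv_mul_zv_inv_mem hp.le)
  · rw [sub_mul, coeff_sub, coeff_zero_zS_mul_zv_inv (Nat.succ_le_succ hp) le_rfl,
      coeff_zero_zv_mul_zv_inv_of_ne hp.ne, sub_zero]

theorem A2_mem_lamSeries (n : ℕ) : A2 n ∈ lamSeries n := by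
  refine prod_mem fun j _ => pow_mem (div_mem_lamSeries (zv j)⁻¹ ?_ ?_ ?_) _
  · rw [mul_inv_cancel₀ (zv_ne_zero j)]
    exact one_mem _
  · rw [add_mul]
    exact add_mem (zS_mul_zv_inv_mem le_rfl) (C_mul_zv_inv_mem hvar_mem_dLeHPolys j)
  · rw [add_mul, coeff_add, coeff_zero_zS_mul_zv_inv (Nat.le_add_left 1 _) le_rfl,
      coeff_zero_C_mul_zv_inv, add_zero]

theorem AA_mem_lamSeries (n : ℕ) : AA n ∈ lamSeries n :=
  mul_mem (mul_mem (A0_mem_lamSeries n) (A1_mem_lamSeries n)) (A2_mem_lamSeries n)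

theorem fCoeff_zero (j m : ℕ) : fCoeff 0 j m = 0 := by
  have hq : ∃ q : MvPolynomial (Fin 2) ℚ, algebraMap (MvPolynomial (Fin 2) ℚ) Fdh q = 0 :=
    ⟨0, map_zero _⟩
  rw [fCoeff, dif_pos hq, IsFractionRing.to_map_eq_zero_iff.1 hq.choose_spec,
    MvPolynomial.coeff_zero]

theorem coefficients_of_A_general (n : ℕ) (i : Fin n → ℤ) :
    (∃ q : MvPolynomial (Fin 2) ℚ,
        algebraMap (MvPolynomial (Fin 2) ℚ) Fdh q = zcoeff i (AA n) ∧
          ∀ m : Fin 2 →₀ ℕ, MvPolynomial.coeff m q ≠ 0 → m 0 ≤ m 1) ∧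
    (i ∉ Lam n → zcoeff i (AA n) = 0) ∧
    (∀ m : ℕ, i ∉ Lam n → Acf n i m m = 0) := by
  obtain ⟨hcoeff, hsupport⟩ := mem_restrictedSubring.1 (AA_mem_lamSeries n)
  obtain ⟨q, hq, hqA⟩ := hcoeff (gamOf i)
  have hvanish : i ∉ Lam n → zcoeff i (AA n) = 0 := fun hi => by
    by_contra h
    exact hi ((AddSubmonoid.mem_map_iff_mem (f := gamOfHom n) gamOf_injective).1 (hsupport h))
  refine ⟨⟨q, hqA, fun m hm => hq (MvPolynomial.mem_support_iff.2 hm)⟩, hvanish, fun m hi => ?_⟩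
  rw [Acf, hvanish hi, fCoeff_zero]

/-- **Lemma 5.5**: for every `i ∈ ℤ^n`, the coefficient of `z^i` in `A` is a polynomial in
`d` and `h` in which every monomial `d^j h^m` occurring with nonzero coefficient satisfies
`j ≤ m`; moreover this coefficient is zero whenever `i ∉ Λ⁺`.  In particular for every
`m ≥ 0` the coefficient of `z^i d^m h^m` in `A` vanishes unless `i ∈ Λ⁺`. -/
theorem coefficients_of_A (n : ℕ) (hn : 2 ≤ n) (i : Fin n → ℤ) :
    (∃ q : MvPolynomial (Fin 2) ℚ,
        algebraMap (MvPolynomial (Fin 2) ℚ) Fdh q = zcoeff i (AA n) ∧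
          ∀ m : Fin 2 →₀ ℕ, MvPolynomial.coeff m q ≠ 0 → m 0 ≤ m 1) ∧
    (i ∉ Lam n → zcoeff i (AA n) = 0) ∧
    (∀ m : ℕ, i ∉ Lam n → Acf n i m m = 0) :=
  coefficients_of_A_general n i

end
end

section
/- For every i ∈ ℤ^n with Σi = 0, the coefficient A¹_i of z^i in A¹ is a rational number satisfying |A¹_i| ≤ n^{3·D(i)}. -/
noncomputable section
open scoped Classical

/-!
Work over an ordered field (in the end `ℚ`, mapped into `Fdh`) with the weighted `ℓ¹`-norm
`‖x‖ = ∑ γ, |x_γ| c ^ D(γ)`, where `c = n⁻³` and `D` is the defect. Since `D` is additive on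
exponents, this norm is submultiplicative, and geometric series `(1 - v)⁻¹` with `‖v‖ < 1` have
norm at most `(1 - ‖v‖)⁻¹`. Dividing numerator and denominator of a factor of `A¹` by their
dominant monomial `z_{t₂}` writes it as `(1 + w) / (1 + v)`, where `w` and `v` are signed sums of
the monomials `z_j / z_{t₂}`, `t₁ ≤ j < t₂`, of defect `t₂ - j ≥ 1`; hence `‖w‖, ‖v‖ ≤ c / (1 - c)`
and the factor has norm at most `(1 - 2c)⁻¹`. By Bernoulli, the `n(n-1)/2` factors give
`‖A¹‖ ≤ 2`. Each factor is `1` plus terms of positive order, so `A¹` has constant term `1` and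
every coefficient satisfies `|A¹_i| c ^ D(i) ≤ 1`.
-/

open Finset

namespace HahnSeries

section OrderTop

variable {Γ R : Type*} [AddCommGroup Γ] [LinearOrder Γ] [IsOrderedAddMonoid Γ]

theorem orderTop_sub_one_pos_mul [Ring R] [IsDomain R] {x y : R⟦Γ⟧}
    (hx : 0 < (x - 1).orderTop) (hy : 0 < (y - 1).orderTop) : 0 < (x * y - 1).orderTop := by
  rw [orderTop_self_sub_one_pos_iff] at *
  exact ⟨by rw [orderTop_mul, hx.1, hy.1, add_zero], by rw [leadingCoeff_mul, hx.2, hy.2, one_mul]⟩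

theorem orderTop_sub_one_pos_inv [Field R] {x : R⟦Γ⟧} (hx : 0 < (x - 1).orderTop) :
    0 < (x⁻¹ - 1).orderTop := by
  rw [orderTop_self_sub_one_pos_iff] at *
  have hx0 : x ≠ 0 := by rintro rfl; simp at hx
  have h := congrArg (fun y : R⟦Γ⟧ => (y.orderTop, y.leadingCoeff)) (mul_inv_cancel₀ hx0)
  simp only [orderTop_mul, leadingCoeff_mul, hx.1, hx.2, zero_add, one_mul, orderTop_one,
    leadingCoeff_one, Prod.mk.injEq] at h
  exact h

theorem orderTop_sum_single_pos [Ring R] [IsDomain R] {ι : Type*} (s : Finset ι) (g : ι → Γ)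
    (r : ι → R) (hg : ∀ i ∈ s, 0 < g i) : 0 < (∑ i ∈ s, single (g i) (r i)).orderTop := by
  rw [← addVal_apply]
  exact (addVal Γ R).map_lt_sum WithTop.coe_ne_top fun i hi =>
    (WithTop.coe_lt_coe.mpr (hg i hi)).trans_le orderTop_single_le

end OrderTop

section MapRingHom

variable {Γ R S : Type*} [AddCommMonoid Γ] [PartialOrder Γ] [IsOrderedCancelAddMonoid Γ]
  [Semiring R] [Semiring S]

def mapRingHom (φ : R →+* S) : R⟦Γ⟧ →+* S⟦Γ⟧ where
  toFun x := x.map φ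
  map_one' := HahnSeries.map_one φ.toMonoidWithZeroHom
  map_mul' _ _ := HahnSeries.map_mul φ.toNonUnitalRingHom
  map_zero' := HahnSeries.map_zero φ.toAddMonoidHom.toZeroHom
  map_add' _ _ := HahnSeries.map_add φ.toAddMonoidHom

@[simp]
theorem mapRingHom_single (φ : R →+* S) (g : Γ) (r : R) :
    mapRingHom φ (single g r) = single g (φ r) :=
  HahnSeries.map_single φ.toAddMonoidHom.toZeroHom

end MapRingHom

section WeightBounded

variable {Γ R : Type*} [AddCommGroup Γ] [PartialOrder Γ] [Field R] [LinearOrder R]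

/-- The weighted `ℓ¹`-norm `∑ γ, |x_γ| c ^ D γ` is at most `B`, phrased through finite partial
sums so that no summability is involved. -/
def IsWeightBounded (D : Γ →+ ℤ) (c : R) (x : R⟦Γ⟧) (B : R) : Prop :=
  ∀ S : Finset Γ, ∑ γ ∈ S, |x.coeff γ| * c ^ D γ ≤ B

namespace IsWeightBounded

variable {D : Γ →+ ℤ} {c : R} {x y : R⟦Γ⟧} {A B : R}

theorem nonneg (hx : IsWeightBounded D c x B) : 0 ≤ B := by
  simpa using hx ∅

theorem mono (hx : IsWeightBounded D c x A) (hAB : A ≤ B) : IsWeightBounded D c x B :=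
  fun S => (hx S).trans hAB

theorem neg (hx : IsWeightBounded D c x B) : IsWeightBounded D c (-x) B := by
  simpa [IsWeightBounded] using hx

variable [IsStrictOrderedRing R]

theorem single (hc : 0 ≤ c) (g : Γ) (r : R) :
    IsWeightBounded D c (single g r) (|r| * c ^ D g) := by
  classical
  intro S
  have hterm : ∀ γ, |(HahnSeries.single g r).coeff γ| * c ^ D γ
      = if γ = g then |r| * c ^ D g else 0 := by
    intro γ
    split_ifs with h <;> simp [h]
  simp only [hterm, sum_ite_eq']
  split_ifs
  · exact le_rfl
  · exact mul_nonneg (abs_nonneg r) (zpow_nonneg hc _)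

theorem sum (hc : 0 ≤ c) {ι : Type*} (s : Finset ι) {f : ι → R⟦Γ⟧} {B : ι → R}
    (hf : ∀ i ∈ s, IsWeightBounded D c (f i) (B i)) :
    IsWeightBounded D c (∑ i ∈ s, f i) (∑ i ∈ s, B i) := by
  intro S
  calc ∑ γ ∈ S, |(∑ i ∈ s, f i).coeff γ| * c ^ D γ
      ≤ ∑ γ ∈ S, ∑ i ∈ s, |(f i).coeff γ| * c ^ D γ := by
        refine sum_le_sum fun γ _ => ?_
        rw [coeff_sum, ← Finset.sum_mul]
        exact mul_le_mul_of_nonneg_right (abs_sum_le_sum_abs _ _) (zpow_nonneg hc _)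
    _ = ∑ i ∈ s, ∑ γ ∈ S, |(f i).coeff γ| * c ^ D γ := Finset.sum_comm
    _ ≤ ∑ i ∈ s, B i := sum_le_sum fun i hi => hf i hi S

theorem add (hc : 0 ≤ c) (hx : IsWeightBounded D c x A) (hy : IsWeightBounded D c y B) :
    IsWeightBounded D c (x + y) (A + B) := by
  simpa using sum hc (s := Finset.univ) (f := ![x, y]) (B := ![A, B])
    (by simpa [Fin.forall_fin_two] using ⟨hx, hy⟩)

theorem one (hc : 0 ≤ c) : IsWeightBounded D c (1 : R⟦Γ⟧) 1 := by
  simpa using single (D := D) hc 0 (1 : R)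

/-- Since `D 0 = 0`, the constant term `1` uses up `1` of the bound `2`. -/
theorem abs_coeff_mul_zpow_le_one (hx : IsWeightBounded D c x 2) (h1 : 0 < (x - 1).orderTop)
    (γ : Γ) : |x.coeff γ| * c ^ D γ ≤ 1 := by
  classical
  have hx0 : x.coeff 0 = 1 := by
    simpa [sub_eq_zero] using coeff_eq_zero_of_lt_orderTop (x := x - 1) (i := 0) h1
  by_cases hγ : γ = 0
  · simp [hγ, hx0]
  · have h := hx {0, γ}
    rw [sum_pair (Ne.symm hγ)] at h
    simp only [hx0, abs_one, map_zero, zpow_zero, mul_one] at h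
    linarith

variable [IsOrderedCancelAddMonoid Γ]

/-- The weight `c ^ D γ` is multiplicative along `γ = α + β`. -/
theorem mul (hc : 0 < c) (hx : IsWeightBounded D c x A) (hy : IsWeightBounded D c y B) :
    IsWeightBounded D c (x * y) (A * B) := by
  classical
  intro S
  set w : Γ → R := fun γ => c ^ D γ
  set T := S.biUnion fun γ => antidiagonal x.isPWO_support y.isPWO_support γ
  calc ∑ γ ∈ S, |(x * y).coeff γ| * w γ
      ≤ ∑ γ ∈ S, ∑ p ∈ antidiagonal x.isPWO_support y.isPWO_support γ,
          |x.coeff p.1| * w p.1 * (|y.coeff p.2| * w p.2) := by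
        refine sum_le_sum fun γ _ => ?_
        rw [coeff_mul]
        refine (mul_le_mul_of_nonneg_right (abs_sum_le_sum_abs _ _)
          (zpow_nonneg hc.le _)).trans_eq ?_
        rw [Finset.sum_mul]
        refine sum_congr rfl fun p hp => ?_
        rw [(mem_antidiagonal.mp hp).2.2.symm]
        simp only [w, map_add, zpow_add₀ hc.ne', abs_mul]
        ring
    _ = ∑ p ∈ T, |x.coeff p.1| * w p.1 * (|y.coeff p.2| * w p.2) := by
        refine (sum_biUnion fun γ _ γ' _ hne => disjoint_left.mpr fun p hp hp' => hne ?_).symm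
        exact (mem_antidiagonal.mp hp).2.2.symm.trans (mem_antidiagonal.mp hp').2.2
    _ ≤ ∑ p ∈ T.image Prod.fst ×ˢ T.image Prod.snd,
          |x.coeff p.1| * w p.1 * (|y.coeff p.2| * w p.2) :=
        sum_le_sum_of_subset_of_nonneg
          (fun p hp => mem_product.mpr ⟨mem_image_of_mem _ hp, mem_image_of_mem _ hp⟩)
          fun _ _ _ => by positivity
    _ = (∑ α ∈ T.image Prod.fst, |x.coeff α| * w α) *
          ∑ β ∈ T.image Prod.snd, |y.coeff β| * w β := by
        rw [sum_mul_sum, sum_product]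
    _ ≤ A * B := mul_le_mul (hx _) (hy _) (sum_nonneg fun _ _ => by positivity) hx.nonneg

theorem pow (hc : 0 < c) (hx : IsWeightBounded D c x B) (k : ℕ) :
    IsWeightBounded D c (x ^ k) (B ^ k) := by
  induction k with
  | zero => simpa using one hc.le
  | succ k ih => simpa [pow_succ] using ih.mul hc hx

theorem prod (hc : 0 < c) {ι : Type*} (s : Finset ι) {f : ι → R⟦Γ⟧} {B : ι → R}
    (hf : ∀ i ∈ s, IsWeightBounded D c (f i) (B i)) :
    IsWeightBounded D c (∏ i ∈ s, f i) (∏ i ∈ s, B i) := by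
  classical
  induction s using Finset.induction_on with
  | empty => simpa using one hc.le
  | insert i s hi ih =>
    rw [prod_insert hi, prod_insert hi]
    exact (hf i (mem_insert_self i s)).mul hc (ih fun j hj => hf j (mem_insert_of_mem hj))

end IsWeightBounded

end WeightBounded

namespace IsWeightBounded

variable {Γ R : Type*} [AddCommGroup Γ] [LinearOrder Γ] [IsOrderedAddMonoid Γ]
  [Field R] [LinearOrder R] [IsStrictOrderedRing R] {D : Γ →+ ℤ} {c β : R} {v w : R⟦Γ⟧}

/-- `(1 - v)⁻¹` is the geometric series `∑ vᵏ`, and each coefficient only sees finitely many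
of its terms. -/
theorem inv_one_sub (hc : 0 < c) (hv : IsWeightBounded D c v β) (hv0 : 0 < v.orderTop)
    (hβ : β < 1) : IsWeightBounded D c (1 - v)⁻¹ (1 - β)⁻¹ := by
  classical
  have hP : (1 - v)⁻¹ = (SummableFamily.powers v).hsum :=
    (eq_inv_of_mul_eq_one_right (SummableFamily.one_sub_self_mul_hsum_powers hv0)).symm
  intro S
  set K := S.biUnion fun γ => ((SummableFamily.powers v).coeff γ).support
  have hcoeff : ∀ γ ∈ S, (1 - v)⁻¹.coeff γ = (∑ k ∈ K, v ^ k).coeff γ := by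
    intro γ hγ
    rw [hP, coeff_sum, SummableFamily.coeff_hsum_eq_sum_of_subset (t := K)]
    · simp [SummableFamily.powers_of_orderTop_pos hv0]
    · intro k hk
      exact mem_biUnion.mpr ⟨γ, hγ, by simpa using hk⟩
  have hK : K ⊆ range (K.sup id + 1) := fun k hk =>
    mem_range.mpr (Nat.lt_succ_of_le (le_sup (f := id) hk))
  calc ∑ γ ∈ S, |(1 - v)⁻¹.coeff γ| * c ^ D γ
      = ∑ γ ∈ S, |(∑ k ∈ K, v ^ k).coeff γ| * c ^ D γ :=
        sum_congr rfl fun γ hγ => by rw [hcoeff γ hγ]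
    _ ≤ ∑ k ∈ K, β ^ k := sum hc.le K (fun k _ => hv.pow hc k) S
    _ ≤ ∑ k ∈ range (K.sup id + 1), β ^ k :=
        sum_le_sum_of_subset_of_nonneg hK fun _ _ _ => pow_nonneg hv.nonneg _
    _ ≤ (1 - β)⁻¹ := by
        have h := geom_sum_Ico_le_of_lt_one (m := 0) (n := K.sup id + 1) hv.nonneg hβ
        rwa [← range_eq_Ico, pow_zero, one_div] at h

theorem one_add_div_one_add (hc : 0 < c) (hw : IsWeightBounded D c w β)
    (hv : IsWeightBounded D c v β) (hv0 : 0 < v.orderTop) (hβ : β < 1) :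
    IsWeightBounded D c ((1 + w) / (1 + v)) ((1 + β) * (1 - β)⁻¹) := by
  rw [div_eq_mul_inv, ← sub_neg_eq_add 1 v]
  exact ((one hc.le).add hc.le hw).mul hc (hv.neg.inv_one_sub hc (by rwa [orderTop_neg]) hβ)

end IsWeightBounded

end HahnSeries

theorem inv_one_sub_pow_le_two {K : Type*} [Field K] [LinearOrder K] [IsStrictOrderedRing K]
    {x : K} {N : ℕ} (hx : x ≤ 2) (hN : N * x ≤ 1 / 2) : (1 - x)⁻¹ ^ N ≤ 2 := by
  have h := one_add_mul_le_pow (show (-2 : K) ≤ -x by linarith) N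
  rw [← sub_eq_add_neg] at h
  rw [inv_pow]
  exact inv_le_of_inv_le₀ two_pos (by linarith)

open HahnSeries

/-- `Dfk` transported along `gamOf`, which reverses and negates the coordinates. -/
def defect (n : ℕ) : Gam n →+ ℤ where
  toFun γ := -∑ k : Fin n, ((k : ℤ) + 1) * ofLex γ k
  map_zero' := by simp only [ofLex_zero, Pi.zero_apply, mul_zero, sum_const_zero, neg_zero]
  map_add' γ δ := by simp only [ofLex_add, Pi.add_apply, mul_add, sum_add_distrib]; ring

theorem defect_gamOf {n : ℕ} (i : Fin n → ℤ) : defect n (gamOf i) = Dfk i := by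
  simp only [defect, gamOf, Dfk, AddMonoidHom.coe_mk, ZeroHom.coe_mk, ofLex_toLex]
  conv_rhs => rw [← Equiv.sum_comp Fin.revPerm]
  simp only [Fin.revPerm_apply, Fin.val_rev, ← sum_neg_distrib]
  refine sum_congr rfl fun k _ => ?_
  have := k.isLt
  push_cast [Nat.sub_sub, Nat.cast_sub (by omega : k.val + 1 ≤ n)]
  ring

theorem Dfk_single {n : ℕ} (j : Fin n) : Dfk (Pi.single j 1 : Fin n → ℤ) = n - j := by
  simp [Dfk, Pi.single_apply]

abbrev zexp {n : ℕ} (j : Fin n) : Gam n := gamOf (Pi.single j 1)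

theorem defect_zexp_sub_zexp {n : ℕ} (j b : Fin n) :
    defect n (zexp j - zexp b) = (b : ℤ) - j := by
  rw [map_sub, defect_gamOf, defect_gamOf, Dfk_single, Dfk_single]
  ring

theorem ofLex_zexp_sub_zexp {n : ℕ} (j b m : Fin n) :
    ofLex (zexp j - zexp b) m = (if m.rev = b then 1 else 0) - if m.rev = j then 1 else 0 := by
  rw [ofLex_sub]
  simp [zexp, gamOf, Pi.single_apply]
  ring

/-- `z_{j+1}/z_{b+1}` is small in the region `|z_1| ≪ ⋯ ≪ |z_n|` when `j < b`. -/
theorem zexp_sub_zexp_pos {n : ℕ} {j b : Fin n} (h : j < b) : 0 < zexp j - zexp b := by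
  refine ⟨b.rev, fun m hm => ?_, ?_⟩
  · have hb : m.rev ≠ b := fun e => hm.ne (by rw [← e, Fin.rev_rev])
    have hj : m.rev ≠ j := fun e => by
      rw [← e, ← Fin.rev_lt_rev, Fin.rev_rev] at h
      exact lt_asymm h hm
    show ofLex (0 : Gam n) m = ofLex (zexp j - zexp b) m
    rw [ofLex_zexp_sub_zexp, if_neg hb, if_neg hj]
    rfl
  · show ofLex (0 : Gam n) b.rev < ofLex (zexp j - zexp b) b.rev
    rw [ofLex_zexp_sub_zexp, Fin.rev_rev, if_pos rfl, if_neg h.ne']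
    exact one_pos

section A1Over

variable (F : Type*) [Field F]

/-- `zv`, `zS` and `A1` over an arbitrary coefficient field (see `A1_eq_A1Over`). -/
def zvar {n : ℕ} (j : Fin n) : HahnSeries (Gam n) F := HahnSeries.single (zexp j) 1

def zsum (n : ℕ) (s t : ℕ) : HahnSeries (Gam n) F :=
  ∑ j ∈ Finset.univ.filter (fun j : Fin n => s ≤ j.val + 1 ∧ j.val + 1 ≤ t), zvar F j

def A1Over (n : ℕ) : HahnSeries (Gam n) F :=
  ∏ p ∈ Finset.univ.filter (fun p : Fin n × Fin n => p.1 < p.2),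
    zsum F n (p.1.val + 1) (p.2.val + 1) / (zsum F n (p.1.val + 2) (p.2.val + 1) - zvar F p.1)

theorem A1_eq_A1Over (n : ℕ) : A1 n = A1Over Fdh n := rfl

/-- `∑_{a ≤ j < b} ε_j z_{j+1}/z_{b+1}`. -/
def zratioSum {n : ℕ} (a b : Fin n) (ε : Fin n → F) : HahnSeries (Gam n) F :=
  ∑ j ∈ Ico a b, HahnSeries.single (zexp j - zexp b) (ε j)

variable {F}

theorem zsum_eq_sum_Icc {n : ℕ} (a b : Fin n) :
    zsum F n (a + 1) (b + 1) = ∑ j ∈ Icc a b, zvar F j :=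
  sum_congr (Finset.ext fun j => by
    simp only [mem_filter, mem_univ, true_and, mem_Icc, Fin.le_def]; omega) fun _ _ => rfl

theorem zsum_eq_sum_Ioc {n : ℕ} (a b : Fin n) :
    zsum F n (a + 2) (b + 1) = ∑ j ∈ Ioc a b, zvar F j :=
  sum_congr (Finset.ext fun j => by
    simp only [mem_filter, mem_univ, true_and, mem_Ioc, Fin.le_def, Fin.lt_def]; omega)
    fun _ _ => rfl

end A1Over

section Factor

variable {F : Type*} [Field F] {n : ℕ}

theorem zvar_div_zvar (j b : Fin n) :
    zvar F j / zvar F b = HahnSeries.single (zexp j - zexp b) 1 := by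
  simp [zvar, zexp]

/-- Dividing numerator and denominator by their dominant monomial `z_{b+1}`. -/
theorem zsum_div_zsum_sub_zvar {a b : Fin n} (hab : a < b) :
    zsum F n (a + 1) (b + 1) / (zsum F n (a + 2) (b + 1) - zvar F a)
      = (1 + zratioSum F a b 1) / (1 + zratioSum F a b fun j => if j = a then -1 else 1) := by
  have hb : zvar F b ≠ 0 := HahnSeries.single_ne_zero one_ne_zero
  have hnum : zsum F n (a + 1) (b + 1) / zvar F b = 1 + zratioSum F a b 1 := by
    rw [zsum_eq_sum_Icc, ← Ico_insert_right hab.le, sum_insert right_notMem_Ico, add_div,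
      div_self hb, sum_div, zratioSum]
    simp [zvar_div_zvar]
  have hden : (zsum F n (a + 2) (b + 1) - zvar F a) / zvar F b
      = 1 + zratioSum F a b fun j => if j = a then -1 else 1 := by
    have hIoo : ∑ j ∈ Ioo a b, single (zexp j - zexp b) (if j = a then (-1 : F) else 1)
        = ∑ j ∈ Ioo a b, zvar F j / zvar F b :=
      sum_congr rfl fun j hj => by rw [if_neg (ne_of_gt (mem_Ioo.mp hj).1), zvar_div_zvar]
    rw [zsum_eq_sum_Ioc, ← Ioo_insert_right hab, sum_insert right_notMem_Ioo, sub_div,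
      add_div, div_self hb, sum_div, zratioSum, ← Ioo_insert_left hab, sum_insert left_notMem_Ioo,
      if_pos rfl, HahnSeries.single_neg, hIoo, zvar_div_zvar]
    abel
  rw [← div_div_div_cancel_right₀ hb, hnum, hden]

theorem orderTop_zratioSum_pos (a b : Fin n) (ε : Fin n → F) :
    0 < (zratioSum F a b ε).orderTop :=
  orderTop_sum_single_pos _ _ _ fun _ hj => zexp_sub_zexp_pos (mem_Ico.mp hj).2

theorem one_add_zratioSum_div_sub_one_orderTop_pos (a b : Fin n) (ε δ : Fin n → F) :
    0 < ((1 + zratioSum F a b ε) / (1 + zratioSum F a b δ) - 1).orderTop := by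
  rw [div_eq_mul_inv]
  refine orderTop_sub_one_pos_mul ?_ (orderTop_sub_one_pos_inv ?_) <;>
    simpa using orderTop_zratioSum_pos a b _

variable [LinearOrder F] [IsStrictOrderedRing F] {c : F}

/-- The weights of the monomials `z_{j+1}/z_{b+1}`, `a ≤ j < b`, are `c, c², …, c^{b-a}`. -/
theorem isWeightBounded_zratioSum (hc : 0 ≤ c) (hc1 : c < 1) (a b : Fin n) {ε : Fin n → F}
    (hε : ∀ j, |ε j| ≤ 1) : IsWeightBounded (defect n) c (zratioSum F a b ε) (c / (1 - c)) := by
  refine (IsWeightBounded.sum hc _ fun j _ => IsWeightBounded.single hc _ (ε j)).mono ?_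
  calc ∑ j ∈ Ico a b, |ε j| * c ^ defect n (zexp j - zexp b)
      ≤ ∑ j ∈ Ico a b, c ^ (b.val - j.val) := by
        refine sum_le_sum fun j hj => ?_
        have hjb : j.val < b.val := (mem_Ico.mp hj).2
        rw [defect_zexp_sub_zexp, show (b : ℤ) - j = ((b.val - j.val : ℕ) : ℤ) by omega,
          zpow_natCast]
        exact mul_le_of_le_one_left (pow_nonneg hc _) (hε j)
    _ = ∑ m ∈ Ico a.val b.val, c ^ (b.val - m) := by
        rw [← Fin.map_valEmbedding_Ico, sum_map]
        rfl
    _ = ∑ m ∈ Ico (b.val + 1 - b.val) (b.val + 1 - a.val), c ^ m :=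
        sum_Ico_reflect _ _ (Nat.le_succ _)
    _ ≤ c / (1 - c) := by
        simpa using geom_sum_Ico_le_of_lt_one (m := 1) (n := b.val + 1 - a.val) hc hc1

theorem isWeightBounded_zsum_div_zsum_sub_zvar (hc : 0 < c) (hc2 : c < 1 / 2) {a b : Fin n}
    (hab : a < b) :
    IsWeightBounded (defect n) c
      (zsum F n (a + 1) (b + 1) / (zsum F n (a + 2) (b + 1) - zvar F a)) (1 - 2 * c)⁻¹ := by
  have hc1 : c < 1 := by linarith
  have hβ : c / (1 - c) < 1 := by rw [div_lt_one (by linarith)]; linarith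
  have hε : ∀ j, |if j = a then (-1 : F) else 1| ≤ 1 := fun j => by split_ifs <;> simp
  have h1 : (1 : F) - c ≠ 0 := by linarith
  have h2 : (1 : F) - 2 * c ≠ 0 := by linarith
  have hB : (1 + c / (1 - c)) * (1 - c / (1 - c))⁻¹ = (1 - 2 * c)⁻¹ := by
    field_simp
    ring
  rw [zsum_div_zsum_sub_zvar hab, ← hB]
  exact IsWeightBounded.one_add_div_one_add hc
    (isWeightBounded_zratioSum hc.le hc1 a b fun _ => by simp)
    (isWeightBounded_zratioSum hc.le hc1 a b hε) (orderTop_zratioSum_pos a b _) hβ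

end Factor

section A1Bound

variable {F : Type*} [Field F] {n : ℕ}

theorem A1Over_sub_one_orderTop_pos : 0 < (A1Over F n - 1).orderTop :=
  prod_induction _ (fun x : HahnSeries (Gam n) F => 0 < (x - 1).orderTop)
    (fun _ _ => orderTop_sub_one_pos_mul) (by simp) fun _ hp => by
      rw [zsum_div_zsum_sub_zvar (mem_filter.mp hp).2]
      exact one_add_zratioSum_div_sub_one_orderTop_pos _ _ _ _

theorem mapRingHom_A1Over {F' : Type*} [Field F'] (φ : F →+* F') :
    mapRingHom φ (A1Over F n) = A1Over F' n := by
  simp [A1Over, zsum, zvar, map_prod, map_div₀, map_sum]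

variable [LinearOrder F] [IsStrictOrderedRing F]

theorem A1Over_isWeightBounded (hn : 2 ≤ n) :
    IsWeightBounded (defect n) ((n : F) ^ 3)⁻¹ (A1Over F n) 2 := by
  have hn' : (2 : F) ≤ n := by exact_mod_cast hn
  have hc : 0 < ((n : F) ^ 3)⁻¹ := by positivity
  have hc8 : ((n : F) ^ 3)⁻¹ ≤ 1 / 8 := by
    rw [inv_le_comm₀ (by positivity) (by norm_num)]
    have h8 := pow_le_pow_left₀ (by norm_num) hn' 3
    norm_num at h8 ⊢
    exact h8
  refine (IsWeightBounded.prod hc _ fun p hp =>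
    isWeightBounded_zsum_div_zsum_sub_zvar hc (by linarith) (mem_filter.mp hp).2).mono ?_
  rw [prod_const, ← univ_product_univ, card_product_filter_lt, card_univ, Fintype.card_fin]
  refine inv_one_sub_pow_le_two (by linarith) ?_
  have hchoose : (n.choose 2 : F) ≤ n ^ 2 / 2 := by simpa using Nat.choose_le_pow_div (α := F) 2 n
  calc (n.choose 2 : F) * (2 * ((n : F) ^ 3)⁻¹) ≤ n ^ 2 / 2 * (2 * ((n : F) ^ 3)⁻¹) :=
        mul_le_mul_of_nonneg_right hchoose (by positivity)
    _ = (n : F)⁻¹ := by field_simp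
    _ ≤ 1 / 2 := by rw [one_div]; exact inv_anti₀ two_pos hn'

theorem abs_coeff_A1Over_le (hn : 2 ≤ n) (i : Fin n → ℤ) :
    |(A1Over F n).coeff (gamOf i)| ≤ (n : F) ^ (3 * Dfk i) := by
  have h := (A1Over_isWeightBounded (F := F) hn).abs_coeff_mul_zpow_le_one
    A1Over_sub_one_orderTop_pos (gamOf i)
  have hpow : ((n : F) ^ 3)⁻¹ ^ defect n (gamOf i) = ((n : F) ^ (3 * Dfk i))⁻¹ := by
    rw [defect_gamOf, inv_zpow, ← zpow_natCast, ← zpow_mul]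
    norm_cast
  rw [hpow, mul_inv_le_iff₀ (zpow_pos (by norm_cast; omega) _), one_mul] at h
  exact h

end A1Bound

theorem coefficient_of_A1_bound_general (n : ℕ) (hn : 2 ≤ n) (i : Fin n → ℤ) :
    ∃ q : ℚ, zcoeff i (A1 n) = (q : Fdh) ∧ |q| ≤ (n : ℚ) ^ (3 * Dfk i) := by
  refine ⟨(A1Over ℚ n).coeff (gamOf i), ?_, abs_coeff_A1Over_le hn i⟩
  rw [A1_eq_A1Over, ← mapRingHom_A1Over (Rat.castHom Fdh)]
  rfl

/-- **Lemma 5.7, `A¹` part**: for `i ∈ ℤ^n` with `Σi = 0`, the coefficient of `z^i` in `A¹`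
is a rational number of absolute value at most `n^{3·D(i)}`. -/
theorem coefficient_of_A1_bound (n : ℕ) (hn : 2 ≤ n) (i : Fin n → ℤ) (hs : Sig i = 0) :
    ∃ q : ℚ, zcoeff i (A1 n) = (q : Fdh) ∧ |q| ≤ (n : ℚ) ^ (3 * Dfk i) :=
  coefficient_of_A1_bound_general n hn i
end
end

section
/- For any rational numbers a_1, …, a_n and δ, the coefficient of (z_1⋯z_n)^{−1} in A·B (an element of ℚ(d,h)) equals h^n · p(d) for a unique polynomial p ∈ ℚ[d] of degree at most n. -/
noncomputable section
open scoped Classical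

/-! Give the variables `z_j` and `h` weight `1` and `d` weight `0`. Every factor of `A` is a
quotient of two forms of the same weight, `B` has weight `n² - n² = 0`, and `d` only ever occurs
through `d·h`. Weight is preserved by the Laurent expansion, including that of an inverse
`(z_j + ⋯)⁻¹ = z_j⁻¹ ∑ₖ (1 - z_j⁻¹ (z_j + ⋯))ᵏ`, so every coefficient of `A·B` at `z^i` is a
homogeneous polynomial of degree `-Σi` in `d·h` and `h`. At `(z_1⋯z_n)⁻¹` this is `h^n p(d)` with
`deg p ≤ n`, and `p` is unique because `d` is transcendental and `h ≠ 0`. -/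

open Polynomial

section DHGrading

variable (R : Type*) {K : Type*} [CommRing R] [Field K] [Algebra R K] (d h : K)

/-- The degree-`k` part of `R[d * h, h]` for the weights `h ↦ 1`, `d ↦ 0`. For `k < 0` the
coefficient condition forces `p = 0`, which makes the integer power `h ^ k` harmless. -/
def dhHomogeneous (k : ℤ) : AddSubgroup K where
  carrier := {x | ∃ p : R[X], (∀ i : ℕ, k < i → p.coeff i = 0) ∧ x = h ^ k * aeval d p}
  zero_mem' := ⟨0, by simp, by simp⟩
  add_mem' := by
    rintro _ _ ⟨p, hp, rfl⟩ ⟨q, hq, rfl⟩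
    exact ⟨p + q, fun i hi => by simp [hp i hi, hq i hi], by rw [map_add, mul_add]⟩
  neg_mem' := by
    rintro _ ⟨p, hp, rfl⟩
    exact ⟨-p, fun i hi => by simp [hp i hi], by rw [map_neg, mul_neg]⟩

variable {R d h}

theorem dhHomogeneous_isGradedMonoid (hh : h ≠ 0) :
    SetLike.GradedMonoid (dhHomogeneous R d h) where
  one_mem := ⟨1, fun i hi => by rw [coeff_one, if_neg (by omega)], by simp⟩
  mul_mem := by
    rintro a b _ _ ⟨p, hp, rfl⟩ ⟨q, hq, rfl⟩
    refine ⟨p * q, fun m hm => ?_, by rw [map_mul, zpow_add₀ hh]; ring⟩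
    rw [coeff_mul]
    refine Finset.sum_eq_zero fun ij hij => ?_
    rw [Finset.HasAntidiagonal.mem_antidiagonal] at hij
    rcases lt_or_ge a ij.1 with h1 | h1
    · rw [hp _ h1, zero_mul]
    · rw [hq _ (by omega), mul_zero]

theorem algebraMap_mem_dhHomogeneous (r : R) : algebraMap R K r ∈ dhHomogeneous R d h 0 :=
  ⟨C r, fun i hi => by simp [coeff_C, (show i ≠ 0 by omega)], by simp⟩

theorem h_mem_dhHomogeneous : h ∈ dhHomogeneous R d h 1 :=
  ⟨1, fun i hi => by rw [coeff_one, if_neg (by omega)], by simp⟩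

theorem d_mul_h_mem_dhHomogeneous : d * h ∈ dhHomogeneous R d h 1 :=
  ⟨X, fun i hi => by simp [coeff_X, (show 1 ≠ i by omega)], by simp [mul_comm]⟩

theorem mem_dhHomogeneous_natCast {k : ℕ} {x : K} :
    x ∈ dhHomogeneous R d h k ↔ ∃ p : R[X], p.natDegree ≤ k ∧ x = h ^ k * aeval d p := by
  change (∃ p : R[X], _ ∧ x = h ^ (k : ℤ) * aeval d p) ↔ _
  simp only [zpow_natCast, natDegree_le_iff_coeff_eq_zero, Nat.cast_lt]

end DHGrading

namespace HahnSeries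

section CommRing

variable {Γ R : Type*} [AddCommMonoid Γ] [PartialOrder Γ] [CommRing R]
  (P : ℤ → AddSubgroup R) (w : Γ →+ ℤ)

/-- The series of degree `D` for the grading `P` of the coefficients, the monomial of exponent `γ`
having degree `-w γ`. -/
def homogeneous (D : ℤ) : AddSubgroup R⟦Γ⟧ where
  carrier := {x | ∀ γ, x.coeff γ ∈ P (D + w γ)}
  zero_mem' _ := by simp
  add_mem' hx hy γ := by simpa using add_mem (hx γ) (hy γ)
  neg_mem' hx γ := by simpa using neg_mem (hx γ)

variable {P w}

theorem single_mem_homogeneous {D : ℤ} {γ₀ : Γ} {r : R} (hr : r ∈ P (D + w γ₀)) :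
    single γ₀ r ∈ homogeneous P w D := fun γ => by
  rcases eq_or_ne γ γ₀ with rfl | hne
  · rwa [coeff_single_same]
  · rw [coeff_single_of_ne hne]; exact zero_mem _

theorem C_mem_homogeneous [IsOrderedCancelAddMonoid Γ] {D : ℤ} {r : R} (hr : r ∈ P D) :
    C r ∈ homogeneous P w D :=
  single_mem_homogeneous (by rwa [map_zero, add_zero])

instance [IsOrderedCancelAddMonoid Γ] [SetLike.GradedMonoid P] :
    SetLike.GradedMonoid (homogeneous P w) where
  one_mem := by
    rw [← C_one]
    exact C_mem_homogeneous SetLike.GradedOne.one_mem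
  mul_mem a b x y hx hy γ := by
    rw [coeff_mul]
    refine sum_mem fun ij hij => ?_
    obtain ⟨-, -, hsum⟩ := Finset.mem_antidiagonal.mp hij
    have hdeg : a + w ij.1 + (b + w ij.2) = a + b + w γ := by rw [← hsum, map_add]; ring
    exact hdeg ▸ SetLike.mul_mem_graded (hx ij.1) (hy ij.2)

theorem hsum_mem_homogeneous {α : Type*} {D : ℤ} {s : SummableFamily Γ R α}
    (hs : ∀ a, s a ∈ homogeneous P w D) : s.hsum ∈ homogeneous P w D := fun γ => by
  rw [SummableFamily.coeff_hsum]
  exact finsum_induction (· ∈ P (D + w γ)) (zero_mem _) (fun _ _ => add_mem) fun a => hs a γ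

end CommRing

section Field

variable {Γ R : Type*} [AddCommGroup Γ] [LinearOrder Γ] [IsOrderedAddMonoid Γ] [Field R]
  {P : ℤ → AddSubgroup R} [SetLike.GradedMonoid P] {w : Γ →+ ℤ}

theorem inv_mem_homogeneous {x : R⟦Γ⟧} {γ₀ : Γ} (hx : x ∈ homogeneous P w (-w γ₀))
    (hlead : x.coeff γ₀ = 1) (hlt : ∀ γ < γ₀, x.coeff γ = 0) :
    x⁻¹ ∈ homogeneous P w (w γ₀) := by
  have hne : x.coeff γ₀ ≠ 0 := by simp [hlead]
  have hord : x.order = γ₀ := by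
    refine le_antisymm (order_le_of_coeff_ne_zero hne) (not_lt.mp fun h => ?_)
    exact coeff_order_eq_zero.not.mpr (ne_zero_of_coeff_ne_zero hne) (hlt _ h)
  have hmono : single (-γ₀) (1 : R) ∈ homogeneous P w (w γ₀) :=
    single_mem_homogeneous (by rw [map_neg, add_neg_cancel]; exact SetLike.GradedOne.one_mem)
  have hunit : 1 - single (-γ₀) 1 * x ∈ homogeneous P w 0 :=
    sub_mem SetLike.GradedOne.one_mem (add_neg_cancel (w γ₀) ▸ SetLike.mul_mem_graded hmono hx)
  have hpowers (k : ℕ) :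
      SummableFamily.powers (1 - single (-γ₀) 1 * x) k ∈ homogeneous P w 0 := by
    rw [SummableFamily.powers_toFun]
    split_ifs
    · simpa using SetLike.pow_mem_graded k hunit
    · simpa using SetLike.pow_mem_graded k (zero_mem (homogeneous P w 0))
  -- `x⁻¹ = single (-γ₀) 1 * ∑ₖ (1 - single (-γ₀) 1 * x) ^ k`
  rw [inv_def, leadingCoeff_eq, hord, hlead, inv_one]
  simpa using SetLike.mul_mem_graded hmono (hsum_mem_homogeneous hpowers)

end Field

end HahnSeries

theorem hvar_ne_zero : hvar ≠ 0 :=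
  (map_ne_zero_iff _ (IsFractionRing.injective _ _)).mpr (MvPolynomial.X_ne_zero 1)

theorem transcendental_dvar : Transcendental ℚ dvar :=
  (transcendental_algebraMap_iff (IsFractionRing.injective _ _)).mpr
    (MvPolynomial.transcendental_X ℚ 0)

instance : SetLike.GradedMonoid (dhHomogeneous ℚ dvar hvar) :=
  dhHomogeneous_isGradedMonoid hvar_ne_zero

/-- The weight of a Hahn exponent: `gamOf i` has weight `-(i₁ + ⋯ + iₙ)`. -/
def negZDegree (n : ℕ) : Gam n →+ ℤ where
  toFun γ := ∑ k, ofLex γ k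
  map_zero' := Finset.sum_const_zero
  map_add' _ _ := Finset.sum_add_distrib

theorem negZDegree_gamOf {n : ℕ} (i : Fin n → ℤ) : negZDegree n (gamOf i) = -∑ k, i k := by
  change ∑ k : Fin n, -i k.rev = _
  rw [Finset.sum_neg_distrib]
  exact congrArg _ (Equiv.sum_comp Fin.revPerm i)

theorem gamOf_single_one {n : ℕ} (j : Fin n) :
    gamOf (Pi.single j 1) = toLex (Pi.single j.rev (-1)) := by
  unfold gamOf
  congr 1
  funext k
  simp only [Pi.single_apply, Fin.rev_eq_iff]
  split_ifs <;> simp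

theorem gamOf_single_one_neg {n : ℕ} (j : Fin n) : gamOf (Pi.single j 1) < 0 := by
  rw [gamOf_single_one]
  exact ⟨j.rev, fun m hm => by simp [hm.ne]; rfl, by simp; exact neg_one_lt_zero⟩

theorem gamOf_single_one_strictAnti {n : ℕ} :
    StrictAnti fun j : Fin n => gamOf (Pi.single j (1 : ℤ)) := fun j j' h => by
  simp only [gamOf_single_one]
  have hrev : j'.rev < j.rev := Fin.rev_lt_rev.mpr h
  exact ⟨j'.rev, fun m hm => by simp [hm.ne, (hm.trans hrev).ne], by
    simp [hrev.ne']⟩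

theorem negZDegree_gamOf_single_one {n : ℕ} (j : Fin n) :
    negZDegree n (gamOf (Pi.single j 1)) = -1 := by
  simp [negZDegree_gamOf]

theorem coeff_zS_gamOf_single_one {n s t : ℕ} {j : Fin n} (hs : s ≤ j.val + 1)
    (ht : j.val + 1 ≤ t) : (zS n s t).coeff (gamOf (Pi.single j 1)) = 1 := by
  rw [zS, HahnSeries.coeff_sum,
    Finset.sum_eq_single_of_mem j (Finset.mem_filter.mpr ⟨Finset.mem_univ _, hs, ht⟩)]
  · exact HahnSeries.coeff_single_same _ _
  · exact fun j' _ hne =>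
      HahnSeries.coeff_single_of_ne (gamOf_single_one_strictAnti.injective.ne hne.symm)

theorem coeff_zS_of_lt {n s t : ℕ} {j : Fin n} (ht : t ≤ j.val + 1) {γ : Gam n}
    (hγ : γ < gamOf (Pi.single j 1)) : (zS n s t).coeff γ = 0 := by
  rw [zS, HahnSeries.coeff_sum]
  refine Finset.sum_eq_zero fun j' hj' => HahnSeries.coeff_single_of_ne (hγ.trans_le ?_).ne
  exact gamOf_single_one_strictAnti.antitone (Fin.le_def.mpr (by simp at hj'; omega))

/-- The series whose coefficient of `z^i` is `h ^ (D - Σi)` times a polynomial in `d` of degree at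
most `D - Σi`. -/
abbrev zhHomogeneous (n : ℕ) : ℤ → AddSubgroup (KK n) :=
  HahnSeries.homogeneous (dhHomogeneous ℚ dvar hvar) (negZDegree n)

namespace zhHomogeneous

variable {n : ℕ}

theorem zv_mem (j : Fin n) : zv j ∈ zhHomogeneous n 1 :=
  HahnSeries.single_mem_homogeneous
    (by rw [negZDegree_gamOf_single_one, add_neg_cancel]; exact SetLike.GradedOne.one_mem)

theorem zS_mem (s t : ℕ) : zS n s t ∈ zhHomogeneous n 1 :=
  sum_mem fun j _ => zv_mem j

theorem cQ_mem (q : ℚ) : cQ q ∈ zhHomogeneous n 0 := by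
  rw [cQ, ← eq_ratCast (algebraMap ℚ Fdh)]
  exact HahnSeries.C_mem_homogeneous (algebraMap_mem_dhHomogeneous q)

theorem cQ_mul_C_mem (q : ℚ) {v : Fdh} (hv : v ∈ dhHomogeneous ℚ dvar hvar 1) :
    cQ q * HahnSeries.C v ∈ zhHomogeneous n 1 := by
  simpa only [zero_add] using SetLike.mul_mem_graded (cQ_mem q) (HahnSeries.C_mem_homogeneous hv)

theorem linearForm_mem (a : Fin n → ℚ) : ∑ j, cQ (a j) * zv j ∈ zhHomogeneous n 1 :=
  sum_mem fun j _ => by simpa only [zero_add] using SetLike.mul_mem_graded (cQ_mem (a j)) (zv_mem j)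

theorem inv_mem_of_leading {x : KK n} (j : Fin n) (hx : x ∈ zhHomogeneous n 1)
    (hlead : x.coeff (gamOf (Pi.single j 1)) = 1)
    (hlt : ∀ γ < gamOf (Pi.single j 1), x.coeff γ = 0) : x⁻¹ ∈ zhHomogeneous n (-1) := by
  have := HahnSeries.inv_mem_homogeneous (by rwa [negZDegree_gamOf_single_one, neg_neg]) hlead hlt
  rwa [negZDegree_gamOf_single_one] at this

theorem inv_zv_mem (j : Fin n) : (zv j)⁻¹ ∈ zhHomogeneous n (-1) :=
  inv_mem_of_leading j (zv_mem j) (HahnSeries.coeff_single_same _ _)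
    fun _ hγ => HahnSeries.coeff_single_of_ne hγ.ne

theorem inv_zS_add_C_mem (j : Fin n) {v : Fdh} (hv : v ∈ dhHomogeneous ℚ dvar hvar 1) :
    (zS n 1 (j.val + 1) + HahnSeries.C v)⁻¹ ∈ zhHomogeneous n (-1) := by
  refine inv_mem_of_leading j (add_mem (zS_mem _ _) (HahnSeries.C_mem_homogeneous hv)) ?_ ?_
  · rw [HahnSeries.coeff_add, coeff_zS_gamOf_single_one (by omega) le_rfl, HahnSeries.C_apply,
      HahnSeries.coeff_single_of_ne (gamOf_single_one_neg j).ne, add_zero]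
  · intro γ hγ
    rw [HahnSeries.coeff_add, coeff_zS_of_lt le_rfl hγ, HahnSeries.C_apply,
      HahnSeries.coeff_single_of_ne (hγ.trans (gamOf_single_one_neg j)).ne, add_zero]

theorem inv_zS_sub_zv_mem {t₁ t₂ : Fin n} (h : t₁ < t₂) :
    (zS n (t₁.val + 2) (t₂.val + 1) - zv t₁)⁻¹ ∈ zhHomogeneous n (-1) := by
  have hlt := gamOf_single_one_strictAnti h
  refine inv_mem_of_leading t₂ (sub_mem (zS_mem _ _) (zv_mem t₁)) ?_ ?_
  · rw [HahnSeries.coeff_sub, coeff_zS_gamOf_single_one (by omega) le_rfl,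
      zv, HahnSeries.coeff_single_of_ne hlt.ne, sub_zero]
  · intro γ hγ
    rw [HahnSeries.coeff_sub, coeff_zS_of_lt le_rfl hγ, zv,
      HahnSeries.coeff_single_of_ne (hγ.trans hlt).ne, sub_zero]

theorem div_mem_zero {x y : KK n} (hx : x ∈ zhHomogeneous n 1)
    (hy : y⁻¹ ∈ zhHomogeneous n (-1)) : x / y ∈ zhHomogeneous n 0 := by
  simpa [div_eq_mul_inv] using SetLike.mul_mem_graded hx hy

theorem prod_mem_zero {ι : Type*} (s : Finset ι) {f : ι → KK n}
    (hf : ∀ i ∈ s, f i ∈ zhHomogeneous n 0) : ∏ i ∈ s, f i ∈ zhHomogeneous n 0 := by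
  simpa using SetLike.prod_mem_graded _ (fun _ => 0) f hf

theorem AA_mem : AA n ∈ zhHomogeneous n 0 := by
  have hA0 : A0 n ∈ zhHomogeneous n 0 := prod_mem_zero _ fun j _ =>
    div_mem_zero (add_mem (zS_mem _ _) (HahnSeries.C_mem_homogeneous d_mul_h_mem_dhHomogeneous))
      (inv_zv_mem j)
  have hA1 : A1 n ∈ zhHomogeneous n 0 := prod_mem_zero _ fun p hp =>
    div_mem_zero (zS_mem _ _) (inv_zS_sub_zv_mem (Finset.mem_filter.mp hp).2)
  have hA2 : A2 n ∈ zhHomogeneous n 0 := prod_mem_zero _ fun j _ => by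
    simpa using SetLike.pow_mem_graded (n + 2)
      (div_mem_zero (zv_mem j) (inv_zS_add_C_mem j h_mem_dhHomogeneous))
  rw [AA]
  simpa only [add_zero] using SetLike.mul_mem_graded (SetLike.mul_mem_graded hA0 hA1) hA2

theorem Nnum_mem (a : Fin n → ℚ) (δ : ℚ) :
    Nnum n a δ ∈ zhHomogeneous n ((n ^ 2 - 1 : ℕ) + 1) := by
  rw [Nnum]
  simpa only [nsmul_one] using SetLike.mul_mem_graded
    (SetLike.pow_mem_graded (n ^ 2 - 1)
      (add_mem (linearForm_mem a) (cQ_mul_C_mem _ h_mem_dhHomogeneous)))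
    (sub_mem (add_mem (linearForm_mem a) (cQ_mul_C_mem _ h_mem_dhHomogeneous))
      (cQ_mul_C_mem _ d_mul_h_mem_dhHomogeneous))

theorem BB_mem (hn : 1 ≤ n) (a : Fin n → ℚ) (δ : ℚ) : BB n a δ ∈ zhHomogeneous n 0 := by
  have hden : ((∏ j : Fin n, zv j) ^ n)⁻¹ ∈ zhHomogeneous n (n • ∑ _ : Fin n, -1) := by
    rw [← inv_pow, ← Finset.prod_inv_distrib]
    exact SetLike.pow_mem_graded n (SetLike.prod_mem_graded _ _ _ fun j _ => inv_zv_mem j)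
  have hdeg : ((n ^ 2 - 1 : ℕ) : ℤ) + 1 + n • ∑ _ : Fin n, (-1 : ℤ) = 0 := by
    simp only [Nat.cast_sub (Nat.one_le_pow 2 n hn), Nat.cast_pow, Nat.cast_one, sub_add_cancel,
      Finset.sum_const, Finset.card_univ, Fintype.card_fin, smul_neg, nsmul_eq_mul, mul_one]
    ring
  rw [BB, div_eq_mul_inv, ← hdeg]
  exact SetLike.mul_mem_graded (Nnum_mem a δ) hden

end zhHomogeneous

/-- **Section 5.1, structural claim**: for any rationals `a_1, …, a_n` and `δ`, the
coefficient of `(z_1⋯z_n)^{−1}` in `A·B` equals `h^n·p(d)` for a unique polynomial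
`p ∈ ℚ[d]` of degree at most `n`. -/
theorem residue_is_polynomial_in_d (n : ℕ) (hn : 2 ≤ n) (a : Fin n → ℚ) (δ : ℚ) :
    ∃! p : Polynomial ℚ, p.natDegree ≤ n ∧
      zcoeff (fun _ => -1) (AA n * BB n a δ) = hvar ^ n * Polynomial.aeval dvar p := by
  have hres : zcoeff (fun _ => -1) (AA n * BB n a δ) ∈ dhHomogeneous ℚ dvar hvar n := by
    simpa [zcoeff, negZDegree_gamOf] using
      SetLike.mul_mem_graded zhHomogeneous.AA_mem (zhHomogeneous.BB_mem (by omega) a δ)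
        (gamOf fun _ => -1)
  obtain ⟨p, hp, hpres⟩ := mem_dhHomogeneous_natCast.mp hres
  refine ⟨p, ⟨hp, hpres⟩, fun q ⟨_, hq⟩ => ?_⟩
  exact transcendental_iff_injective.mp transcendental_dvar
    (mul_left_cancel₀ (pow_ne_zero n hvar_ne_zero) (hq.symm.trans hpres))

end
end

section
/- Let n ≥ 2 and a_t = n^{8(n+1−t)} for t = 1, …, n. For every i ∈ ℤ^n with Σi = 0 and i_t ≥ −n for all t: ( (n²)! / ∏_{t=1}^n (i_t + n)! ) · ∏_{t=1}^n a_t^{i_t + n} ≤ n^{8·D(i)} · ( (n²)! / (n!)^n ) · ∏_{t=1}^n a_t^n. -/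
noncomputable section
open scoped Classical

/-! Since `a_t = n ^ (8 * (n - t))` (counting `t` from `0`), the weights turn `∏ a_t ^ i_t` into
`n ^ (8 * D(i))`, so only the multinomial coefficients remain to be compared. For every `k` one has
`n! * n ^ k ≤ k! * n ^ n`; multiplying these over `t` with `k = i_t + n`, the powers of `n` cancel
because `Σ (i_t + n) = n²`, which gives `(n!)^n ≤ ∏ (i_t + n)!`: the balanced multinomial
coefficient is the largest. -/

open Finset
open scoped Nat

theorem Nat.factorial_mul_pow_le_factorial_mul_pow (n k : ℕ) : n ! * n ^ k ≤ k ! * n ^ n := by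
  rcases le_total n k with h | h
  · calc n ! * n ^ k = n ! * n ^ (k - n) * n ^ n := by
          rw [mul_assoc, ← pow_add, Nat.sub_add_cancel h]
      _ ≤ k ! * n ^ n := Nat.mul_le_mul_right _ (Nat.factorial_mul_pow_sub_le_factorial h)
  · calc n ! * n ^ k = k ! * n.descFactorial (n - k) * n ^ k := by
          rw [← Nat.factorial_mul_descFactorial (Nat.sub_le n k), Nat.sub_sub_self h]
      _ ≤ k ! * n ^ (n - k) * n ^ k := by gcongr; exact Nat.descFactorial_le_pow n _
      _ = k ! * n ^ n := by rw [mul_assoc, ← pow_add, Nat.sub_add_cancel h]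

theorem pow_factorial_le_prod_factorial {ι : Type*} (s : Finset ι) (k : ι → ℕ) (n : ℕ)
    (hk : ∑ t ∈ s, k t = #s * n) : n ! ^ #s ≤ ∏ t ∈ s, (k t)! := by
  have hpow : 0 < n ^ (#s * n) := by
    rcases n.eq_zero_or_pos with rfl | hn
    · simp
    · positivity
  refine Nat.le_of_mul_le_mul_right ?_ hpow
  calc n ! ^ #s * n ^ (#s * n) = ∏ t ∈ s, n ! * n ^ k t := by
        rw [prod_mul_distrib, prod_const, prod_pow_eq_pow_sum, hk]
    _ ≤ ∏ t ∈ s, (k t)! * n ^ n :=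
        prod_le_prod' fun t _ => Nat.factorial_mul_pow_le_factorial_mul_pow n (k t)
    _ = (∏ t ∈ s, (k t)!) * n ^ (#s * n) := by
        rw [prod_mul_distrib, prod_const, ← pow_mul, mul_comm n]

theorem zpow_sum₀ {G₀ ι : Type*} [CommGroupWithZero G₀] {x : G₀} (hx : x ≠ 0)
    (s : Finset ι) (e : ι → ℤ) : x ^ (∑ t ∈ s, e t) = ∏ t ∈ s, x ^ e t := by
  induction s using Finset.cons_induction with
  | empty => simp
  | cons a s ha ih => rw [sum_cons, prod_cons, zpow_add₀ hx, ih]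

theorem astd_pos {n : ℕ} (t : Fin n) : 0 < astd n t :=
  pow_pos (Nat.cast_pos.2 t.pos) _

theorem prod_astd_zpow (n : ℕ) (i : Fin n → ℤ) :
    ∏ t, astd n t ^ i t = (n : ℚ) ^ (8 * Dfk i) := by
  rcases eq_or_ne n 0 with rfl | hn
  · simp [Dfk]
  have hterm (t : Fin n) : astd n t ^ i t = (n : ℚ) ^ (8 * ((n : ℤ) - t) * i t) := by
    rw [astd, ← zpow_natCast, ← zpow_mul]
    push_cast [Nat.cast_sub t.isLt.le]
    rfl
  rw [Fintype.prod_congr _ _ hterm, ← zpow_sum₀ (Nat.cast_ne_zero.2 hn), Dfk, mul_sum]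
  exact congrArg _ (sum_congr rfl fun t _ => by ring)

theorem multinomial_coefficient_bound_general (n : ℕ) (i : Fin n → ℤ)
    (hs : Sig i = 0) (hb : ∀ t, -(n : ℤ) ≤ i t) :
    ((n ^ 2).factorial : ℚ) / (∏ t : Fin n, ((i t + n).toNat.factorial : ℚ))
        * ∏ t : Fin n, astd n t ^ (i t + (n : ℤ))
      ≤ (n : ℚ) ^ (8 * Dfk i) * (((n ^ 2).factorial : ℚ) / ((n.factorial : ℚ)) ^ n)
        * ∏ t : Fin n, astd n t ^ (n : ℤ) := by
  have hk (t : Fin n) : ((i t + n).toNat : ℤ) = i t + n :=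
    Int.toNat_of_nonneg (by linarith [hb t])
  have hfac : n ! ^ n ≤ ∏ t, (i t + n).toNat ! := by
    simpa using pow_factorial_le_prod_factorial univ (fun t => (i t + n).toNat) n (by
      zify
      simp [hk, sum_add_distrib, show ∑ t, i t = 0 from hs])
  have hweights : ∏ t, astd n t ^ (i t + (n : ℤ))
      = (n : ℚ) ^ (8 * Dfk i) * ∏ t, astd n t ^ (n : ℤ) := by
    simp_rw [zpow_add₀ (astd_pos _).ne', prod_mul_distrib, prod_astd_zpow]
  calc _ ≤ ((n ^ 2)! : ℚ) / (n ! : ℚ) ^ n * ∏ t, astd n t ^ (i t + (n : ℤ)) := by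
        gcongr
        · exact prod_nonneg fun t _ => (zpow_pos (astd_pos t) _).le
        · exact_mod_cast hfac
    _ = _ := by rw [hweights]; ring

/-- **Inequality (5.11)**: for `a_t = n^{8(n+1−t)}` and `i ∈ ℤ^n` with `Σi = 0` and
`i_t ≥ −n` for all `t`,
`((n²)!/∏(i_t+n)!)·∏ a_t^{i_t+n} ≤ n^{8D(i)}·((n²)!/(n!)^n)·∏ a_t^n`. -/
theorem multinomial_coefficient_bound (n : ℕ) (hn : 2 ≤ n) (i : Fin n → ℤ)
    (hs : Sig i = 0) (hb : ∀ t, -(n : ℤ) ≤ i t) :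
    ((n ^ 2).factorial : ℚ) / (∏ t : Fin n, ((i t + n).toNat.factorial : ℚ))
        * ∏ t : Fin n, astd n t ^ (i t + (n : ℤ))
      ≤ (n : ℚ) ^ (8 * Dfk i) * (((n ^ 2).factorial : ℚ) / ((n.factorial : ℚ)) ^ n)
        * ∏ t : Fin n, astd n t ^ (n : ℤ) :=
  multinomial_coefficient_bound_general n i hs hb

end
end
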